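/- arXiv:math/0508630 — 10 statements merged into one kernel-verified Lean document; each statement's English description precedes it below -/
import Mathlib

section
/- Any two projective planes of order 3 are isomorphic; moreover, given ordered ovals (q₁,q₂,q₃,q₄) and (q₁',q₂',q₃',q₄') in projective planes of order 3, there is a unique isomorphism carrying qᵢ to qᵢ' for each i. -/
structure ProjPlane (n : ℕ) where
  P : Type
  [fintypeP : Fintype P]
  [decP : DecidableEq P]
  L : Finset (Finset P)
  cardP : Fintype.card P = n ^ 2 + n + 1
  cardL : L.card = n ^ 2 + n + 1
  line_card : ∀ ℓ ∈ L, ℓ.card = n + 1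
  point_lines : ∀ p : P, (L.filter (fun ℓ => p ∈ ℓ)).card = n + 1
  unique_line : ∀ p q : P, p ≠ q → ∃! ℓ, ℓ ∈ L ∧ p ∈ ℓ ∧ q ∈ ℓ
  lines_meet : ∀ ℓ ∈ L, ∀ m ∈ L, ℓ ≠ m → (ℓ ∩ m).card = 1

attribute [instance] ProjPlane.fintypeP ProjPlane.decP

def IsOrderedOval {n : ℕ} (Pl : ProjPlane n) (q : Fin 4 → Pl.P) : Prop :=
  Function.Injective q ∧
    ∀ ℓ ∈ Pl.L, (Finset.univ.filter (fun i => q i ∈ ℓ)).card ≤ 2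

namespace PP

variable {Pl : ProjPlane 3}

instance (Pl : ProjPlane 3) : Nonempty Pl.P := by
  have := Pl.cardP
  have : 0 < Fintype.card Pl.P := by omega
  exact Fintype.card_pos_iff.mp this

/-- the unique line through two distinct points -/
noncomputable def lineOf (p r : Pl.P) : Finset Pl.P :=
  if h : p ≠ r then (Pl.unique_line p r h).choose else ∅

lemma lineOf_spec {p r : Pl.P} (h : p ≠ r) :
    lineOf p r ∈ Pl.L ∧ p ∈ lineOf p r ∧ r ∈ lineOf p r := by
  rw [lineOf, dif_pos h]; exact (Pl.unique_line p r h).choose_spec.1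

lemma lineOf_mem_L {p r : Pl.P} (h : p ≠ r) : lineOf p r ∈ Pl.L := (lineOf_spec h).1
lemma mem_lineOf_left {p r : Pl.P} (h : p ≠ r) : p ∈ lineOf p r := (lineOf_spec h).2.1
lemma mem_lineOf_right {p r : Pl.P} (h : p ≠ r) : r ∈ lineOf p r := (lineOf_spec h).2.2

lemma lineOf_unique {p r : Pl.P} (h : p ≠ r) {ℓ : Finset Pl.P}
    (hL : ℓ ∈ Pl.L) (hp : p ∈ ℓ) (hr : r ∈ ℓ) : ℓ = lineOf p r := by
  rw [lineOf, dif_pos h]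
  exact (Pl.unique_line p r h).choose_spec.2 ℓ ⟨hL, hp, hr⟩

/-- two lines containing two common distinct points are equal -/
lemma line_eq_line {p r : Pl.P} (h : p ≠ r) {ℓ m : Finset Pl.P}
    (hℓ : ℓ ∈ Pl.L) (hm : m ∈ Pl.L) (hpℓ : p ∈ ℓ) (hrℓ : r ∈ ℓ)
    (hpm : p ∈ m) (hrm : r ∈ m) : ℓ = m := by
  rw [lineOf_unique h hℓ hpℓ hrℓ, lineOf_unique h hm hpm hrm]

/-- two distinct lines meet in at most one point -/
lemma meet_unique {ℓ m : Finset Pl.P} (hℓ : ℓ ∈ Pl.L) (hm : m ∈ Pl.L) (hne : ℓ ≠ m)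
    {x y : Pl.P} (hxℓ : x ∈ ℓ) (hxm : x ∈ m) (hyℓ : y ∈ ℓ) (hym : y ∈ m) : x = y := by
  have h1 := Pl.lines_meet ℓ hℓ m hm hne
  have := Finset.card_le_one.mp (le_of_eq h1) x (Finset.mem_inter.mpr ⟨hxℓ, hxm⟩)
    y (Finset.mem_inter.mpr ⟨hyℓ, hym⟩)
  exact this

/-- the intersection point of two distinct lines -/
noncomputable def meetPt (ℓ m : Finset Pl.P) : Pl.P :=
  if h : ∃ x, x ∈ ℓ ∧ x ∈ m then h.choose else Classical.arbitrary Pl.P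

lemma meetPt_ex {ℓ m : Finset Pl.P} (hℓ : ℓ ∈ Pl.L) (hm : m ∈ Pl.L) (hne : ℓ ≠ m) :
    ∃ x, x ∈ ℓ ∧ x ∈ m := by
  have h1 := Pl.lines_meet ℓ hℓ m hm hne
  obtain ⟨a, ha⟩ := Finset.card_eq_one.mp h1
  exact ⟨a, Finset.mem_inter.mp (ha ▸ Finset.mem_singleton_self a)⟩

lemma meetPt_mem {ℓ m : Finset Pl.P} (hℓ : ℓ ∈ Pl.L) (hm : m ∈ Pl.L) (hne : ℓ ≠ m) :
    meetPt ℓ m ∈ ℓ ∧ meetPt ℓ m ∈ m := by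
  rw [meetPt, dif_pos (meetPt_ex hℓ hm hne)]
  exact (meetPt_ex hℓ hm hne).choose_spec

lemma eq_meetPt {ℓ m : Finset Pl.P} (hℓ : ℓ ∈ Pl.L) (hm : m ∈ Pl.L) (hne : ℓ ≠ m)
    {x : Pl.P} (hxℓ : x ∈ ℓ) (hxm : x ∈ m) : x = meetPt ℓ m :=
  meet_unique hℓ hm hne hxℓ hxm (meetPt_mem hℓ hm hne).1 (meetPt_mem hℓ hm hne).2

/-- a 4-point line minus three distinct points leaves a unique fourth point -/
lemma fourth_ex {ℓ : Finset Pl.P} (hℓ : ℓ ∈ Pl.L) {a b c : Pl.P}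
    (ha : a ∈ ℓ) (hb : b ∈ ℓ) (hc : c ∈ ℓ) (hab : a ≠ b) (hac : a ≠ c) (hbc : b ≠ c) :
    ∃! x, x ∈ ℓ ∧ x ≠ a ∧ x ≠ b ∧ x ≠ c := by
  have hcard : ℓ.card = 4 := Pl.line_card ℓ hℓ
  have hsub : ({a, b, c} : Finset Pl.P) ⊆ ℓ := by
    intro x hx; simp at hx; rcases hx with rfl | rfl | rfl <;> assumption
  have hc3 : ({a, b, c} : Finset Pl.P).card = 3 := by
    rw [Finset.card_insert_of_notMem (by simp [hab, hac]),
      Finset.card_insert_of_notMem (by simp [hbc]), Finset.card_singleton]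
  have hd : (ℓ \ {a, b, c}).card = 1 := by
    rw [Finset.card_sdiff_of_subset hsub, hcard, hc3]
  obtain ⟨x, hx⟩ := Finset.card_eq_one.mp hd
  refine ⟨x, ?_, ?_⟩
  · have := hx ▸ Finset.mem_singleton_self x
    simp [Finset.mem_sdiff] at this
    exact ⟨this.1, this.2.1, this.2.2.1, this.2.2.2⟩
  · intro y hy
    have : y ∈ ℓ \ ({a, b, c} : Finset Pl.P) := by
      simp [Finset.mem_sdiff, hy.1, hy.2.1, hy.2.2.1, hy.2.2.2]
    rw [hx] at this; simpa using this


section Oval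
variable {q : Fin 4 → Pl.P} (hq : IsOrderedOval Pl q)
include hq

lemma qne {i j : Fin 4} (h : i ≠ j) : q i ≠ q j :=
  fun h' => h (hq.1 h')

lemma not_three {ℓ : Finset Pl.P} (hℓ : ℓ ∈ Pl.L)
    {i j k : Fin 4} (hij : i ≠ j) (hik : i ≠ k) (hjk : j ≠ k)
    (h1 : q i ∈ ℓ) (h2 : q j ∈ ℓ) (h3 : q k ∈ ℓ) : False := by
  have hsub : ({i, j, k} : Finset (Fin 4)) ⊆ Finset.univ.filter (fun m => q m ∈ ℓ) := by
    intro x hx; simp at hx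
    rcases hx with rfl | rfl | rfl <;> simp [h1, h2, h3]
  have h3' : ({i, j, k} : Finset (Fin 4)).card = 3 := by
    rw [Finset.card_insert_of_notMem (by simp [hij, hik]),
      Finset.card_insert_of_notMem (by simp [hjk]), Finset.card_singleton]
  have := (Finset.card_le_card hsub).trans (hq.2 ℓ hℓ)
  omega

/-- secant line through `q i` and `q j` -/
noncomputable def sec (q : Fin 4 → Pl.P) (i j : Fin 4) : Finset Pl.P := lineOf (q i) (q j)

lemma sec_mem_L {i j : Fin 4} (h : i ≠ j) : sec q i j ∈ Pl.L := lineOf_mem_L (qne hq h)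
lemma q_mem_sec_left {i j : Fin 4} (h : i ≠ j) : q i ∈ sec q i j := mem_lineOf_left (qne hq h)
lemma q_mem_sec_right {i j : Fin 4} (h : i ≠ j) : q j ∈ sec q i j := mem_lineOf_right (qne hq h)

lemma sec_unique {i j : Fin 4} (h : i ≠ j) {ℓ : Finset Pl.P} (hL : ℓ ∈ Pl.L)
    (hi : q i ∈ ℓ) (hj : q j ∈ ℓ) : ℓ = sec q i j := lineOf_unique (qne hq h) hL hi hj

lemma sec_symm {i j : Fin 4} (h : i ≠ j) : sec q i j = sec q j i :=
  sec_unique hq h.symm (sec_mem_L hq h) (q_mem_sec_right hq h) (q_mem_sec_left hq h)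

/-- `q k` is not on the secant through `q i, q j` for `k ∉ {i,j}` -/
lemma q_notMem_sec {i j k : Fin 4} (hij : i ≠ j) (hki : k ≠ i) (hkj : k ≠ j) :
    q k ∉ sec q i j := fun h =>
  not_three hq (sec_mem_L hq hij) hki hkj hij h
    (q_mem_sec_left hq hij) (q_mem_sec_right hq hij)

/-- secants through different pairs are different -/
lemma sec_ne_sec {i j k l : Fin 4} (hij : i ≠ j) (hkl : k ≠ l) (hik : i ≠ k) (hil : i ≠ l) :
    sec q i j ≠ sec q k l := fun h =>
  q_notMem_sec hq hkl hik hil (h ▸ q_mem_sec_left hq hij)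

/-- the diagonal point: meet of opposite secants -/
noncomputable def Dp (q : Fin 4 → Pl.P) (i j k l : Fin 4) : Pl.P := meetPt (sec q i j) (sec q k l)

variable {i j k l : Fin 4}

/-- a convenient bundle for four pairwise-distinct indices -/
def PD (i j k l : Fin 4) : Prop :=
  i ≠ j ∧ i ≠ k ∧ i ≠ l ∧ j ≠ k ∧ j ≠ l ∧ k ≠ l

instance {i j k l : Fin 4} : Decidable (PD i j k l) :=
  inferInstanceAs (Decidable (_ ∧ _ ∧ _ ∧ _ ∧ _ ∧ _))

lemma Dp_mem (h : PD i j k l) : Dp q i j k l ∈ sec q i j ∧ Dp q i j k l ∈ sec q k l :=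
  meetPt_mem (sec_mem_L hq h.1) (sec_mem_L hq h.2.2.2.2.2)
    (sec_ne_sec hq h.1 h.2.2.2.2.2 h.2.1 h.2.2.1)

lemma eq_Dp (h : PD i j k l) {x : Pl.P} (h1 : x ∈ sec q i j) (h2 : x ∈ sec q k l) :
    x = Dp q i j k l :=
  eq_meetPt (sec_mem_L hq h.1) (sec_mem_L hq h.2.2.2.2.2)
    (sec_ne_sec hq h.1 h.2.2.2.2.2 h.2.1 h.2.2.1) h1 h2

lemma Dp_ne_q (h : PD i j k l) : Dp q i j k l ≠ q i ∧ Dp q i j k l ≠ q j ∧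
    Dp q i j k l ≠ q k ∧ Dp q i j k l ≠ q l := by
  obtain ⟨h1, h2⟩ := Dp_mem hq h
  obtain ⟨hij, hik, hil, hjk, hjl, hkl⟩ := h
  exact ⟨fun e => q_notMem_sec hq hkl hik hil (e ▸ h2),
    fun e => q_notMem_sec hq hkl hjk hjl (e ▸ h2),
    fun e => q_notMem_sec hq hij hik.symm hjk.symm (e ▸ h1),
    fun e => q_notMem_sec hq hij hil.symm hjl.symm (e ▸ h1)⟩

/-- symmetry of Dp in all admissible permutations, via characterization -/
lemma Dp_symm (h : PD i j k l) (h' : PD k l i j) : Dp q i j k l = Dp q k l i j :=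
  eq_Dp hq h' (Dp_mem hq h).2 (Dp_mem hq h).1

lemma Dp_symm_left (h : PD i j k l) (h' : PD j i k l) : Dp q i j k l = Dp q j i k l :=
  eq_Dp hq h' (sec_symm hq h.1 ▸ (Dp_mem hq h).1) (Dp_mem hq h).2

lemma Dp_symm_right (h : PD i j k l) (h' : PD i j l k) : Dp q i j k l = Dp q i j l k :=
  eq_Dp hq h' (Dp_mem hq h).1 (sec_symm hq h.2.2.2.2.2 ▸ (Dp_mem hq h).2)

/-- the fourth point of a secant -/
noncomputable def Rp (q : Fin 4 → Pl.P) (i j k l : Fin 4) : Pl.P :=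
  if h : ∃ x, x ∈ sec q i j ∧ x ≠ q i ∧ x ≠ q j ∧ x ≠ Dp q i j k l then h.choose
  else Classical.arbitrary Pl.P

lemma Rp_ex (h : PD i j k l) :
    ∃! x, x ∈ sec q i j ∧ x ≠ q i ∧ x ≠ q j ∧ x ≠ Dp q i j k l := by
  have hd := Dp_ne_q hq h
  exact fourth_ex (sec_mem_L hq h.1) (q_mem_sec_left hq h.1) (q_mem_sec_right hq h.1)
    (Dp_mem hq h).1 (qne hq h.1) (Ne.symm hd.1) (Ne.symm hd.2.1)

lemma Rp_spec (h : PD i j k l) : Rp q i j k l ∈ sec q i j ∧ Rp q i j k l ≠ q i ∧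
    Rp q i j k l ≠ q j ∧ Rp q i j k l ≠ Dp q i j k l := by
  rw [Rp, dif_pos (Rp_ex hq h).exists]; exact (Rp_ex hq h).exists.choose_spec

lemma eq_Rp (h : PD i j k l) {x : Pl.P} (h1 : x ∈ sec q i j) (h2 : x ≠ q i) (h3 : x ≠ q j)
    (h4 : x ≠ Dp q i j k l) : x = Rp q i j k l := by
  exact (Rp_ex hq h).unique ⟨h1, h2, h3, h4⟩ (Rp_spec hq h)

/-- every point of a secant is one of the four named points -/
lemma mem_sec_cases (h : PD i j k l) {x : Pl.P} (hx : x ∈ sec q i j) :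
    x = q i ∨ x = q j ∨ x = Dp q i j k l ∨ x = Rp q i j k l := by
  by_cases h1 : x = q i; · exact Or.inl h1
  by_cases h2 : x = q j; · exact Or.inr (Or.inl h2)
  by_cases h3 : x = Dp q i j k l; · exact Or.inr (Or.inr (Or.inl h3))
  exact Or.inr (Or.inr (Or.inr (eq_Rp hq h hx h1 h2 h3)))

/-- the secant as an explicit finset -/
lemma sec_eq (h : PD i j k l) :
    sec q i j = {q i, q j, Dp q i j k l, Rp q i j k l} := by
  apply Finset.Subset.antisymm
  · intro x hx
    rcases mem_sec_cases hq h hx with rfl | rfl | rfl | rfl <;> simp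
  · intro x hx
    simp at hx
    rcases hx with rfl | rfl | rfl | rfl
    · exact q_mem_sec_left hq h.1
    · exact q_mem_sec_right hq h.1
    · exact (Dp_mem hq h).1
    · exact (Rp_spec hq h).1


omit hq in
lemma PD.perm (h : PD i j k l) : PD j i k l ∧ PD i j l k ∧ PD k l i j ∧ PD i k j l := by
  obtain ⟨h1, h2, h3, h4, h5, h6⟩ := h
  exact ⟨⟨h1.symm, h4, h5, h2, h3, h6⟩, ⟨h1, h3, h2, h5, h4, h6.symm⟩,
    ⟨h6, h2.symm, h4.symm, h3.symm, h5.symm, h1⟩, ⟨h2, h1, h3, h4.symm, h6, h5⟩⟩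

omit hq in
lemma PD.univ (h : PD i j k l) : ({i, j, k, l} : Finset (Fin 4)) = Finset.univ := by
  obtain ⟨h1, h2, h3, h4, h5, h6⟩ := h
  apply Finset.eq_univ_of_card
  rw [Finset.card_insert_of_notMem (by simp [h1, h2, h3]),
    Finset.card_insert_of_notMem (by simp [h4, h5]),
    Finset.card_insert_of_notMem (by simp [h6]), Finset.card_singleton]
  rfl

omit hq in
lemma eq_of_ne_three {m : Fin 4} (h : PD i j k l) (h1 : m ≠ i) (h2 : m ≠ j) (h3 : m ≠ k) :
    m = l := by
  have : m ∈ ({i, j, k, l} : Finset (Fin 4)) := (PD.univ h) ▸ Finset.mem_univ m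
  simp [h1, h2, h3] at this
  exact this

lemma Rp_symm_right (h : PD i j k l) : Rp q i j k l = Rp q i j l k := by
  have h' := (PD.perm h).2.1
  have hs := Rp_spec hq h
  exact eq_Rp hq h' hs.1 hs.2.1 hs.2.2.1 (Dp_symm_right hq h h' ▸ hs.2.2.2)

lemma Rp_symm_left (h : PD i j k l) : Rp q i j k l = Rp q j i k l := by
  have h' := (PD.perm h).1
  have hs := Rp_spec hq h
  refine eq_Rp hq h' (sec_symm hq h.1 ▸ hs.1) hs.2.2.1 hs.2.1 ?_
  have : Dp q j i k l = Dp q i j k l := (Dp_symm_left hq h h').symm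
  rw [this]; exact hs.2.2.2

/-- if two distinct secants share an index, their meet is the shared oval point -/
lemma mem_sec_sec_adj {m : Fin 4} (hij : i ≠ j) (him : i ≠ m) (hjm : j ≠ m)
    {x : Pl.P} (h1 : x ∈ sec q i j) (h2 : x ∈ sec q i m) : x = q i := by
  have hne : sec q i j ≠ sec q i m := fun e =>
    q_notMem_sec hq him hij.symm hjm (e ▸ q_mem_sec_right hq hij)
  exact meet_unique (sec_mem_L hq hij) (sec_mem_L hq him) hne h1 h2
    (q_mem_sec_left hq hij) (q_mem_sec_left hq him)

lemma Rp_ne_qk (h : PD i j k l) : Rp q i j k l ≠ q k ∧ Rp q i j k l ≠ q l := by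
  have hs := (Rp_spec hq h).1
  obtain ⟨hij, hik, hil, hjk, hjl, hkl⟩ := h
  exact ⟨fun e => q_notMem_sec hq hij hik.symm hjk.symm (e ▸ hs),
    fun e => q_notMem_sec hq hij hil.symm hjl.symm (e ▸ hs)⟩

lemma Rp_notMem_sec_opp (h : PD i j k l) : Rp q i j k l ∉ sec q k l := fun hm =>
  (Rp_spec hq h).2.2.2 (eq_Dp hq h (Rp_spec hq h).1 hm)

/-- Rp of pair (i,j) is not on an adjacent secant (i,m) -/
lemma Rp_notMem_sec_adj {m : Fin 4} (h : PD i j k l) (him : i ≠ m) (hjm : j ≠ m) :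
    Rp q i j k l ∉ sec q i m := fun hm =>
  (Rp_spec hq h).2.1 (mem_sec_sec_adj hq h.1 him hjm (Rp_spec hq h).1 hm)

/-- two Rp's on secants sharing exactly the index i are distinct -/
lemma Rp_ne_Rp_share {m a b : Fin 4} (h : PD i j k l) (h2 : PD i m a b)
    (hjm : j ≠ m) : Rp q i j k l ≠ Rp q i m a b := fun e => by
  have := (Rp_spec hq h2).1
  rw [← e] at this
  exact Rp_notMem_sec_adj hq h (h2.1) hjm this

/-- two Rp's on opposite secants are distinct -/
lemma Rp_ne_Rp_opp {a b : Fin 4} (h : PD i j k l) (h2 : PD k l a b) :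
    Rp q i j k l ≠ Rp q k l a b := fun e => by
  have := (Rp_spec hq h2).1
  rw [← e] at this
  exact Rp_notMem_sec_opp hq h this

/-- the tangent line at `q i` : the line through `q i` and `Rp q k l i j` -/
noncomputable def Tl (q : Fin 4 → Pl.P) (i j k l : Fin 4) : Finset Pl.P :=
  lineOf (q i) (Rp q k l i j)

lemma q_ne_Rp (h : PD i j k l) : q i ≠ Rp q k l i j := by
  have h' := (PD.perm h).2.2.1
  intro e
  exact q_notMem_sec hq h'.1 h.2.1 h.2.2.1 (e ▸ (Rp_spec hq h').1)

lemma Tl_mem_L (h : PD i j k l) : Tl q i j k l ∈ Pl.L := lineOf_mem_L (q_ne_Rp hq h)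
lemma q_mem_Tl (h : PD i j k l) : q i ∈ Tl q i j k l := mem_lineOf_left (q_ne_Rp hq h)
lemma Rp_mem_Tl (h : PD i j k l) : Rp q k l i j ∈ Tl q i j k l := mem_lineOf_right (q_ne_Rp hq h)

/-- the tangent contains no other oval point -/
lemma q_notMem_Tl (h : PD i j k l) {m : Fin 4} (hmi : m ≠ i) : q m ∉ Tl q i j k l := by
  intro hm
  have h' := (PD.perm h).2.2.1
  have hT := Tl_mem_L hq h
  have heq : Tl q i j k l = sec q i m :=
    sec_unique hq hmi.symm hT (q_mem_Tl hq h) hm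
  have hR : Rp q k l i j ∈ sec q i m := heq ▸ Rp_mem_Tl hq h
  rcases eq_or_ne m j with rfl | hmj
  · exact Rp_notMem_sec_opp hq h' hR
  · rcases eq_or_ne m k with rfl | hmk
    · exact (Rp_spec hq h').2.1 (mem_sec_sec_adj hq h'.1 h.2.1.symm h.2.2.1.symm
        (Rp_spec hq h').1 (sec_symm hq h.2.1 ▸ hR))
    · have hml : m = l := eq_of_ne_three h hmi hmj hmk
      subst hml
      exact (Rp_spec hq h').2.2.1 (mem_sec_sec_adj hq h'.1.symm h.2.2.1.symm h.2.1.symm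
        (sec_symm hq h'.1 ▸ (Rp_spec hq h').1) (sec_symm hq h.2.2.1 ▸ hR))

/-- generic: a point on two secants sharing the oval point `q m` equals `q m`. -/
lemma eq_q_of_mem_two {a b c d m : Fin 4} (hab : a ≠ b) (hcd : c ≠ d)
    (hne : sec q a b ≠ sec q c d) (hm1 : q m ∈ sec q a b) (hm2 : q m ∈ sec q c d)
    {x : Pl.P} (h1 : x ∈ sec q a b) (h2 : x ∈ sec q c d) : x = q m :=
  meet_unique (sec_mem_L hq hab) (sec_mem_L hq hcd) hne h1 h2 hm1 hm2

lemma Dp_ne_Dp (h : PD i j k l) : Dp q i j k l ≠ Dp q i k j l := by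
  intro e
  obtain ⟨hij, hik, hil, hjk, hjl, hkl⟩ := h
  have h2 : PD i k j l := (PD.perm ⟨hij, hik, hil, hjk, hjl, hkl⟩).2.2.2
  have hne : sec q i j ≠ sec q i k := fun e' =>
    q_notMem_sec hq hik hij.symm hjk ((e' ▸ q_mem_sec_right hq hij : q j ∈ sec q i k))
  have hx : Dp q i j k l = q i :=
    eq_q_of_mem_two hq hij hik hne (q_mem_sec_left hq hij) (q_mem_sec_left hq hik)
      (Dp_mem hq ⟨hij, hik, hil, hjk, hjl, hkl⟩).1 (e ▸ (Dp_mem hq h2).1)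
  exact (Dp_ne_q hq ⟨hij, hik, hil, hjk, hjl, hkl⟩).1 hx

lemma Rp_mem_Tl' (h : PD i j k l) : Rp q j l i k ∈ Tl q i j k l := by
  obtain ⟨hij, hik, hil, hjk, hjl, hkl⟩ := h
  have h' := (PD.perm ⟨hij, hik, hil, hjk, hjl, hkl⟩).2.2.1  -- PD k l i j
  have hjl' : PD j l i k := ⟨hjl, hij.symm, hjk, hil.symm, hkl.symm, hik⟩
  have hT := Tl_mem_L hq ⟨hij, hik, hil, hjk, hjl, hkl⟩
  have hS := sec_mem_L hq hjl
  have hne : Tl q i j k l ≠ sec q j l := fun e =>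
    q_notMem_Tl hq ⟨hij, hik, hil, hjk, hjl, hkl⟩ hij.symm
      (e ▸ q_mem_sec_left hq hjl)
  obtain ⟨hx1, hx2⟩ := meetPt_mem hT hS hne
  rcases mem_sec_cases hq hjl' hx2 with e | e | e | e
  · exact absurd (e ▸ hx1) (q_notMem_Tl hq ⟨hij, hik, hil, hjk, hjl, hkl⟩ hij.symm)
  · exact absurd (e ▸ hx1) (q_notMem_Tl hq ⟨hij, hik, hil, hjk, hjl, hkl⟩ hil.symm)
  · -- x = Dp q j l i k lies on sec i k together with q i; forces Tl = sec i k
    exfalso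
    have hDik : Dp q j l i k ∈ sec q i k := (Dp_mem hq hjl').2
    have hDqi : Dp q j l i k ≠ q i := (Dp_ne_q hq hjl').2.2.1
    have hTeq : Tl q i j k l = sec q i k :=
      line_eq_line hDqi.symm hT (sec_mem_L hq hik)
        (q_mem_Tl hq ⟨hij, hik, hil, hjk, hjl, hkl⟩) (e ▸ hx1)
        (q_mem_sec_left hq hik) hDik
    have hm : Rp q k l i j ∈ sec q i k := hTeq ▸ Rp_mem_Tl hq ⟨hij, hik, hil, hjk, hjl, hkl⟩
    have hRq : Rp q k l i j = q k := by
      refine eq_q_of_mem_two hq hkl hik ?_ (q_mem_sec_left hq hkl)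
        (q_mem_sec_right hq hik) (Rp_spec hq h').1 hm
      exact fun e' => q_notMem_sec hq hik hil.symm hkl.symm
        ((e' ▸ q_mem_sec_right hq hkl : q l ∈ sec q i k))
    exact (Rp_spec hq h').2.1 hRq
  · exact e ▸ hx1

lemma Tl_symm (h : PD i j k l) : Tl q i j k l = Tl q i j l k := by
  have h' := (PD.perm h).2.2.1  -- PD k l i j
  rw [Tl, Tl, Rp_symm_left hq h']

lemma Rp_mem_Tl'' (h : PD i j k l) : Rp q j k i l ∈ Tl q i j k l := by
  have h' := (PD.perm h).2.1  -- PD i j l k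
  rw [Tl_symm hq h]
  exact Rp_mem_Tl' hq h'

lemma Tl_card_mem (h : PD i j k l) :
    Tl q i j k l = {q i, Rp q k l i j, Rp q j l i k, Rp q j k i l} := by
  obtain ⟨hij, hik, hil, hjk, hjl, hkl⟩ := h
  have h : PD i j k l := ⟨hij, hik, hil, hjk, hjl, hkl⟩
  have hkl' : PD k l i j := (PD.perm h).2.2.1
  have hjl' : PD j l i k := ⟨hjl, hij.symm, hjk, hil.symm, hkl.symm, hik⟩
  have hjk' : PD j k i l := ⟨hjk, hij.symm, hjl, hik.symm, hkl, hil⟩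
  have hT := Tl_mem_L hq h
  -- distinctness of the four members
  have d1 : q i ≠ Rp q k l i j := q_ne_Rp hq h
  have d2 : q i ≠ Rp q j l i k := fun e =>
    q_notMem_sec hq hjl hij hil (e ▸ (Rp_spec hq hjl').1)
  have d3 : q i ≠ Rp q j k i l := fun e =>
    q_notMem_sec hq hjk hij hik (e ▸ (Rp_spec hq hjk').1)
  have d4 : Rp q k l i j ≠ Rp q j l i k := by
    intro e
    have hne : sec q k l ≠ sec q j l := fun e' =>
      q_notMem_sec hq hjl hjk.symm hkl ((e' ▸ q_mem_sec_left hq hkl : q k ∈ sec q j l))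
    have hm2 : Rp q k l i j ∈ sec q j l := e.symm ▸ (Rp_spec hq hjl').1
    have : Rp q k l i j = q l :=
      eq_q_of_mem_two hq hkl hjl hne (q_mem_sec_right hq hkl) (q_mem_sec_right hq hjl)
        (Rp_spec hq hkl').1 hm2
    exact (Rp_spec hq hkl').2.2.1 this
  have d5 : Rp q k l i j ≠ Rp q j k i l := by
    intro e
    have hne : sec q k l ≠ sec q j k := fun e' =>
      q_notMem_sec hq hjk hjl.symm hkl.symm ((e' ▸ q_mem_sec_right hq hkl : q l ∈ sec q j k))
    have hm2 : Rp q k l i j ∈ sec q j k := e.symm ▸ (Rp_spec hq hjk').1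
    have : Rp q k l i j = q k :=
      eq_q_of_mem_two hq hkl hjk hne (q_mem_sec_left hq hkl) (q_mem_sec_right hq hjk)
        (Rp_spec hq hkl').1 hm2
    exact (Rp_spec hq hkl').2.1 this
  have d6 : Rp q j l i k ≠ Rp q j k i l := by
    intro e
    have hne : sec q j l ≠ sec q j k := fun e' =>
      q_notMem_sec hq hjk hjl.symm hkl.symm ((e' ▸ q_mem_sec_right hq hjl : q l ∈ sec q j k))
    have hm2 : Rp q j l i k ∈ sec q j k := e.symm ▸ (Rp_spec hq hjk').1
    have : Rp q j l i k = q j :=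
      eq_q_of_mem_two hq hjl hjk hne (q_mem_sec_left hq hjl) (q_mem_sec_left hq hjk)
        (Rp_spec hq hjl').1 hm2
    exact (Rp_spec hq hjl').2.1 this
  -- the four members
  have hsub : ({q i, Rp q k l i j, Rp q j l i k, Rp q j k i l} : Finset Pl.P) ⊆ Tl q i j k l := by
    intro x hx
    simp only [Finset.mem_insert, Finset.mem_singleton] at hx
    rcases hx with rfl | rfl | rfl | rfl
    · exact q_mem_Tl hq h
    · exact Rp_mem_Tl hq h
    · exact Rp_mem_Tl' hq h
    · exact Rp_mem_Tl'' hq h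
  have hcard : ({q i, Rp q k l i j, Rp q j l i k, Rp q j k i l} : Finset Pl.P).card = 4 := by
    rw [Finset.card_insert_of_notMem (by simp [d1, d2, d3]),
      Finset.card_insert_of_notMem (by simp [d4, d5]),
      Finset.card_insert_of_notMem (by simp [d6]), Finset.card_singleton]
  exact (Finset.eq_of_subset_of_card_le hsub
    (by rw [hcard, Pl.line_card _ hT])).symm

/-- the external line through `Rp q i j k l` and `Rp q k l i j` -/
noncomputable def El (q : Fin 4 → Pl.P) (i j k l : Fin 4) : Finset Pl.P :=
  lineOf (Rp q i j k l) (Rp q k l i j)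

lemma Rp_ne_Rp_opp' (h : PD i j k l) : Rp q i j k l ≠ Rp q k l i j :=
  Rp_ne_Rp_opp hq h (PD.perm h).2.2.1

lemma El_mem_L (h : PD i j k l) : El q i j k l ∈ Pl.L := lineOf_mem_L (Rp_ne_Rp_opp' hq h)
lemma Rp_mem_El_left (h : PD i j k l) : Rp q i j k l ∈ El q i j k l :=
  mem_lineOf_left (Rp_ne_Rp_opp' hq h)
lemma Rp_mem_El_right (h : PD i j k l) : Rp q k l i j ∈ El q i j k l :=
  mem_lineOf_right (Rp_ne_Rp_opp' hq h)

lemma q_notMem_El (h : PD i j k l) (m : Fin 4) : q m ∉ El q i j k l := by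
  intro hm
  obtain ⟨hij, hik, hil, hjk, hjl, hkl⟩ := h
  have h : PD i j k l := ⟨hij, hik, hil, hjk, hjl, hkl⟩
  have hkl' : PD k l i j := (PD.perm h).2.2.1
  have hE := El_mem_L hq h
  -- helper: if q a ∈ El and both q a, Rp ∈ sec, then El = sec
  by_cases hmi : i = m
  · subst hmi
    have heq : El q i j k l = sec q i j :=
      line_eq_line (Rp_spec hq h).2.1.symm hE (sec_mem_L hq hij) hm
        (Rp_mem_El_left hq h) (q_mem_sec_left hq hij) (Rp_spec hq h).1
    exact Rp_notMem_sec_opp hq hkl' (heq ▸ Rp_mem_El_right hq h)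
  by_cases hmj : j = m
  · subst hmj
    have heq : El q i j k l = sec q i j :=
      line_eq_line (Rp_spec hq h).2.2.1.symm hE (sec_mem_L hq hij) hm
        (Rp_mem_El_left hq h) (q_mem_sec_right hq hij) (Rp_spec hq h).1
    exact Rp_notMem_sec_opp hq hkl' (heq ▸ Rp_mem_El_right hq h)
  by_cases hmk : k = m
  · subst hmk
    have heq : El q i j k l = sec q k l :=
      line_eq_line (Rp_spec hq hkl').2.1.symm hE (sec_mem_L hq hkl) hm
        (Rp_mem_El_right hq h) (q_mem_sec_left hq hkl) (Rp_spec hq hkl').1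
    exact Rp_notMem_sec_opp hq h (heq ▸ Rp_mem_El_left hq h)
  · have hml : l = m := (eq_of_ne_three h (Ne.symm hmi) (Ne.symm hmj) (Ne.symm hmk)).symm
    subst hml
    have heq : El q i j k l = sec q k l :=
      line_eq_line (Rp_spec hq hkl').2.2.1.symm hE (sec_mem_L hq hkl) hm
        (Rp_mem_El_right hq h) (q_mem_sec_right hq hkl) (Rp_spec hq hkl').1
    exact Rp_notMem_sec_opp hq h (heq ▸ Rp_mem_El_left hq h)

lemma Dp_mem_El (h : PD i j k l) : Dp q i k j l ∈ El q i j k l := by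
  obtain ⟨hij, hik, hil, hjk, hjl, hkl⟩ := h
  have h : PD i j k l := ⟨hij, hik, hil, hjk, hjl, hkl⟩
  have hkl' : PD k l i j := (PD.perm h).2.2.1
  have hik' : PD i k j l := (PD.perm h).2.2.2
  have hji' : PD j i k l := (PD.perm h).1
  have hE := El_mem_L hq h
  have hS := sec_mem_L hq hik
  have hne : El q i j k l ≠ sec q i k := fun e =>
    q_notMem_El hq h i (e ▸ q_mem_sec_left hq hik)
  obtain ⟨hx1, hx2⟩ := meetPt_mem hE hS hne
  rcases mem_sec_cases hq hik' hx2 with e | e | e | e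
  · exact absurd (e ▸ hx1) (q_notMem_El hq h i)
  · exact absurd (e ▸ hx1) (q_notMem_El hq h k)
  · exact e ▸ hx1
  · -- x = Rp q i k j l forces El to be the tangent at q j, contradiction
    exfalso
    have hTmem : Rp q i k j l ∈ Tl q j i k l := Rp_mem_Tl'' hq hji'
    have hTmem2 : Rp q k l i j ∈ Tl q j i k l := by
      have := Rp_mem_Tl hq hji'  -- Rp q k l j i ∈ Tl q j i k l
      rwa [← Rp_symm_right hq hkl'] at this
    have hd : Rp q k l i j ≠ Rp q i k j l := by
      intro e'
      have hne2 : sec q k l ≠ sec q i k := fun e'' =>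
        q_notMem_sec hq hik hil.symm hkl.symm ((e'' ▸ q_mem_sec_right hq hkl : q l ∈ sec q i k))
      have : Rp q k l i j = q k :=
        eq_q_of_mem_two hq hkl hik hne2 (q_mem_sec_left hq hkl) (q_mem_sec_right hq hik)
          (Rp_spec hq hkl').1 (e'.symm ▸ (Rp_spec hq hik').1)
      exact (Rp_spec hq hkl').2.1 this
    have heq : El q i j k l = Tl q j i k l :=
      line_eq_line hd hE (Tl_mem_L hq hji') (Rp_mem_El_right hq h) (e ▸ hx1) hTmem2 hTmem
    have hmem : Rp q i j k l ∈ Tl q j i k l := heq ▸ Rp_mem_El_left hq h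
    rw [Tl_card_mem hq hji'] at hmem
    simp only [Finset.mem_insert, Finset.mem_singleton] at hmem
    rcases hmem with e' | e' | e' | e'
    · exact (Rp_spec hq h).2.2.1 e'
    · rw [← Rp_symm_right hq hkl'] at e'
      exact Rp_ne_Rp_opp' hq h e'
    · -- Rp q i j k l = Rp q i l j k
      have hne2 : sec q i j ≠ sec q i l := fun e'' =>
        q_notMem_sec hq hil hij.symm hjl ((e'' ▸ q_mem_sec_right hq hij : q j ∈ sec q i l))
      have hil' : PD i l j k := ⟨hil, hij, hik, hjl.symm, hkl.symm, hjk⟩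
      have : Rp q i j k l = q i :=
        eq_q_of_mem_two hq hij hil hne2 (q_mem_sec_left hq hij) (q_mem_sec_left hq hil)
          (Rp_spec hq h).1 (e'.symm ▸ (Rp_spec hq hil').1)
      exact (Rp_spec hq h).2.1 this
    · have hne2 : sec q i j ≠ sec q i k := fun e'' =>
        q_notMem_sec hq hik hij.symm hjk ((e'' ▸ q_mem_sec_right hq hij : q j ∈ sec q i k))
      have : Rp q i j k l = q i :=
        eq_q_of_mem_two hq hij hik hne2 (q_mem_sec_left hq hij) (q_mem_sec_left hq hik)
          (Rp_spec hq h).1 (e'.symm ▸ (Rp_spec hq hik').1)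
      exact (Rp_spec hq h).2.1 this

lemma El_symm (h : PD i j k l) : El q i j k l = El q i j l k := by
  have hkl' : PD k l i j := (PD.perm h).2.2.1
  rw [El, El, ← Rp_symm_right hq h, ← Rp_symm_left hq hkl']

lemma Dp_mem_El' (h : PD i j k l) : Dp q i l j k ∈ El q i j k l := by
  have h' : PD i j l k := (PD.perm h).2.1
  rw [El_symm hq h]
  exact Dp_mem_El hq h'

lemma El_card_mem (h : PD i j k l) :
    El q i j k l = {Rp q i j k l, Rp q k l i j, Dp q i k j l, Dp q i l j k} := by
  obtain ⟨hij, hik, hil, hjk, hjl, hkl⟩ := h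
  have h : PD i j k l := ⟨hij, hik, hil, hjk, hjl, hkl⟩
  have hkl' : PD k l i j := (PD.perm h).2.2.1
  have hik' : PD i k j l := (PD.perm h).2.2.2
  have hil' : PD i l j k := ⟨hil, hij, hik, hjl.symm, hkl.symm, hjk⟩
  have hE := El_mem_L hq h
  have e1 : Rp q i j k l ≠ Rp q k l i j := Rp_ne_Rp_opp' hq h
  have e2 : Rp q i j k l ≠ Dp q i k j l := by
    intro e
    have hne2 : sec q i j ≠ sec q i k := fun e'' =>
      q_notMem_sec hq hik hij.symm hjk ((e'' ▸ q_mem_sec_right hq hij : q j ∈ sec q i k))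
    have : Rp q i j k l = q i :=
      eq_q_of_mem_two hq hij hik hne2 (q_mem_sec_left hq hij) (q_mem_sec_left hq hik)
        (Rp_spec hq h).1 (e ▸ (Dp_mem hq hik').1)
    exact (Rp_spec hq h).2.1 this
  have e3 : Rp q i j k l ≠ Dp q i l j k := by
    intro e
    have hne2 : sec q i j ≠ sec q i l := fun e'' =>
      q_notMem_sec hq hil hij.symm hjl ((e'' ▸ q_mem_sec_right hq hij : q j ∈ sec q i l))
    have : Rp q i j k l = q i :=
      eq_q_of_mem_two hq hij hil hne2 (q_mem_sec_left hq hij) (q_mem_sec_left hq hil)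
        (Rp_spec hq h).1 (e ▸ (Dp_mem hq hil').1)
    exact (Rp_spec hq h).2.1 this
  have e4 : Rp q k l i j ≠ Dp q i k j l := by
    intro e
    have hne2 : sec q k l ≠ sec q i k := fun e'' =>
      q_notMem_sec hq hik hil.symm hkl.symm ((e'' ▸ q_mem_sec_right hq hkl : q l ∈ sec q i k))
    have : Rp q k l i j = q k :=
      eq_q_of_mem_two hq hkl hik hne2 (q_mem_sec_left hq hkl) (q_mem_sec_right hq hik)
        (Rp_spec hq hkl').1 (e ▸ (Dp_mem hq hik').1)
    exact (Rp_spec hq hkl').2.1 this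
  have e5 : Rp q k l i j ≠ Dp q i l j k := by
    intro e
    have hne2 : sec q k l ≠ sec q i l := fun e'' =>
      q_notMem_sec hq hil hik.symm hkl ((e'' ▸ q_mem_sec_left hq hkl : q k ∈ sec q i l))
    have : Rp q k l i j = q l :=
      eq_q_of_mem_two hq hkl hil hne2 (q_mem_sec_right hq hkl) (q_mem_sec_right hq hil)
        (Rp_spec hq hkl').1 (e ▸ (Dp_mem hq hil').1)
    exact (Rp_spec hq hkl').2.2.1 this
  have e6 : Dp q i k j l ≠ Dp q i l j k := by
    intro e
    have hne2 : sec q i k ≠ sec q i l := fun e'' =>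
      q_notMem_sec hq hil hik.symm hkl ((e'' ▸ q_mem_sec_right hq hik : q k ∈ sec q i l))
    have : Dp q i k j l = q i :=
      eq_q_of_mem_two hq hik hil hne2 (q_mem_sec_left hq hik) (q_mem_sec_left hq hil)
        (Dp_mem hq hik').1 (e ▸ (Dp_mem hq hil').1)
    exact (Dp_ne_q hq hik').1 this
  have hsub : ({Rp q i j k l, Rp q k l i j, Dp q i k j l, Dp q i l j k} : Finset Pl.P)
      ⊆ El q i j k l := by
    intro x hx
    simp only [Finset.mem_insert, Finset.mem_singleton] at hx
    rcases hx with rfl | rfl | rfl | rfl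
    · exact Rp_mem_El_left hq h
    · exact Rp_mem_El_right hq h
    · exact Dp_mem_El hq h
    · exact Dp_mem_El' hq h
  have hcard : ({Rp q i j k l, Rp q k l i j, Dp q i k j l, Dp q i l j k} : Finset Pl.P).card = 4 := by
    rw [Finset.card_insert_of_notMem (by simp [e1, e2, e3]),
      Finset.card_insert_of_notMem (by simp [e4, e5]),
      Finset.card_insert_of_notMem (by simp [e6]), Finset.card_singleton]
  exact (Finset.eq_of_subset_of_card_le hsub (by rw [hcard, Pl.line_card _ hE])).symm

lemma Rp_ne_Dp_cross (h : PD i j k l) : Rp q i j k l ≠ Dp q i k j l := by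
  obtain ⟨hij, hik, hil, hjk, hjl, hkl⟩ := h
  have h : PD i j k l := ⟨hij, hik, hil, hjk, hjl, hkl⟩
  have hik' : PD i k j l := (PD.perm h).2.2.2
  intro e
  have hne2 : sec q i j ≠ sec q i k := fun e'' =>
    q_notMem_sec hq hik hij.symm hjk ((e'' ▸ q_mem_sec_right hq hij : q j ∈ sec q i k))
  have : Rp q i j k l = q i :=
    eq_q_of_mem_two hq hij hik hne2 (q_mem_sec_left hq hij) (q_mem_sec_left hq hik)
      (Rp_spec hq h).1 (e ▸ (Dp_mem hq hik').1)
  exact (Rp_spec hq h).2.1 this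

/-- canonical enumeration of the 13 points from the oval -/
noncomputable def Npt (q : Fin 4 → Pl.P) : Fin 13 → Pl.P := fun n =>
  match n with
  | ⟨0, _⟩ => q 0 | ⟨1, _⟩ => q 1 | ⟨2, _⟩ => q 2 | ⟨3, _⟩ => q 3
  | ⟨4, _⟩ => Dp q 0 1 2 3 | ⟨5, _⟩ => Dp q 0 2 1 3 | ⟨6, _⟩ => Dp q 0 3 1 2
  | ⟨7, _⟩ => Rp q 0 1 2 3 | ⟨8, _⟩ => Rp q 0 2 1 3 | ⟨9, _⟩ => Rp q 0 3 1 2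
  | ⟨10, _⟩ => Rp q 1 2 0 3 | ⟨11, _⟩ => Rp q 1 3 0 2 | ⟨12, _⟩ => Rp q 2 3 0 1

omit hq in
lemma inj_aux {α : Type} (f : Fin 13 → α) (h : ∀ a b : Fin 13, a < b → f a ≠ f b) :
    Function.Injective f := by
  intro a b hab
  rcases lt_trichotomy a b with h' | h' | h'
  · exact absurd hab (h a b h')
  · exact h'
  · exact absurd hab.symm (h b a h')

set_option maxHeartbeats 4000000 in
lemma Npt_inj : Function.Injective (Npt q) := by
  have pd0123 : PD 0 1 2 3 := by decide
  have pd0132 : PD 0 1 3 2 := by decide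
  have pd0213 : PD 0 2 1 3 := by decide
  have pd0231 : PD 0 2 3 1 := by decide
  have pd0312 : PD 0 3 1 2 := by decide
  have pd0321 : PD 0 3 2 1 := by decide
  have pd1023 : PD 1 0 2 3 := by decide
  have pd1032 : PD 1 0 3 2 := by decide
  have pd1203 : PD 1 2 0 3 := by decide
  have pd1302 : PD 1 3 0 2 := by decide
  have pd2013 : PD 2 0 1 3 := by decide
  have pd2031 : PD 2 0 3 1 := by decide
  have pd2103 : PD 2 1 0 3 := by decide
  have pd2301 : PD 2 3 0 1 := by decide
  have pd3012 : PD 3 0 1 2 := by decide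
  have pd3021 : PD 3 0 2 1 := by decide
  have pd3102 : PD 3 1 0 2 := by decide
  have pd3201 : PD 3 2 0 1 := by decide
  have d_0_1 : (q 0 : Pl.P) ≠ q 1 := qne hq (by decide)
  have d_0_2 : (q 0 : Pl.P) ≠ q 2 := qne hq (by decide)
  have d_0_3 : (q 0 : Pl.P) ≠ q 3 := qne hq (by decide)
  have d_0_4 : (q 0 : Pl.P) ≠ Dp q 0 1 2 3 := (Dp_ne_q hq pd0123).1.symm
  have d_0_5 : (q 0 : Pl.P) ≠ Dp q 0 2 1 3 := (Dp_ne_q hq pd0213).1.symm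
  have d_0_6 : (q 0 : Pl.P) ≠ Dp q 0 3 1 2 := (Dp_ne_q hq pd0312).1.symm
  have d_0_7 : (q 0 : Pl.P) ≠ Rp q 0 1 2 3 := (Rp_spec hq pd0123).2.1.symm
  have d_0_8 : (q 0 : Pl.P) ≠ Rp q 0 2 1 3 := (Rp_spec hq pd0213).2.1.symm
  have d_0_9 : (q 0 : Pl.P) ≠ Rp q 0 3 1 2 := (Rp_spec hq pd0312).2.1.symm
  have d_0_10 : (q 0 : Pl.P) ≠ Rp q 1 2 0 3 := (Rp_ne_qk hq pd1203).1.symm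
  have d_0_11 : (q 0 : Pl.P) ≠ Rp q 1 3 0 2 := (Rp_ne_qk hq pd1302).1.symm
  have d_0_12 : (q 0 : Pl.P) ≠ Rp q 2 3 0 1 := (Rp_ne_qk hq pd2301).1.symm
  have d_1_2 : (q 1 : Pl.P) ≠ q 2 := qne hq (by decide)
  have d_1_3 : (q 1 : Pl.P) ≠ q 3 := qne hq (by decide)
  have d_1_4 : (q 1 : Pl.P) ≠ Dp q 0 1 2 3 := (Dp_ne_q hq pd0123).2.1.symm
  have d_1_5 : (q 1 : Pl.P) ≠ Dp q 0 2 1 3 := (Dp_ne_q hq pd0213).2.2.1.symm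
  have d_1_6 : (q 1 : Pl.P) ≠ Dp q 0 3 1 2 := (Dp_ne_q hq pd0312).2.2.1.symm
  have d_1_7 : (q 1 : Pl.P) ≠ Rp q 0 1 2 3 := (Rp_spec hq pd0123).2.2.1.symm
  have d_1_8 : (q 1 : Pl.P) ≠ Rp q 0 2 1 3 := (Rp_ne_qk hq pd0213).1.symm
  have d_1_9 : (q 1 : Pl.P) ≠ Rp q 0 3 1 2 := (Rp_ne_qk hq pd0312).1.symm
  have d_1_10 : (q 1 : Pl.P) ≠ Rp q 1 2 0 3 := (Rp_spec hq pd1203).2.1.symm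
  have d_1_11 : (q 1 : Pl.P) ≠ Rp q 1 3 0 2 := (Rp_spec hq pd1302).2.1.symm
  have d_1_12 : (q 1 : Pl.P) ≠ Rp q 2 3 0 1 := (Rp_ne_qk hq pd2301).2.symm
  have d_2_3 : (q 2 : Pl.P) ≠ q 3 := qne hq (by decide)
  have d_2_4 : (q 2 : Pl.P) ≠ Dp q 0 1 2 3 := (Dp_ne_q hq pd0123).2.2.1.symm
  have d_2_5 : (q 2 : Pl.P) ≠ Dp q 0 2 1 3 := (Dp_ne_q hq pd0213).2.1.symm
  have d_2_6 : (q 2 : Pl.P) ≠ Dp q 0 3 1 2 := (Dp_ne_q hq pd0312).2.2.2.symm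
  have d_2_7 : (q 2 : Pl.P) ≠ Rp q 0 1 2 3 := (Rp_ne_qk hq pd0123).1.symm
  have d_2_8 : (q 2 : Pl.P) ≠ Rp q 0 2 1 3 := (Rp_spec hq pd0213).2.2.1.symm
  have d_2_9 : (q 2 : Pl.P) ≠ Rp q 0 3 1 2 := (Rp_ne_qk hq pd0312).2.symm
  have d_2_10 : (q 2 : Pl.P) ≠ Rp q 1 2 0 3 := (Rp_spec hq pd1203).2.2.1.symm
  have d_2_11 : (q 2 : Pl.P) ≠ Rp q 1 3 0 2 := (Rp_ne_qk hq pd1302).2.symm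
  have d_2_12 : (q 2 : Pl.P) ≠ Rp q 2 3 0 1 := (Rp_spec hq pd2301).2.1.symm
  have d_3_4 : (q 3 : Pl.P) ≠ Dp q 0 1 2 3 := (Dp_ne_q hq pd0123).2.2.2.symm
  have d_3_5 : (q 3 : Pl.P) ≠ Dp q 0 2 1 3 := (Dp_ne_q hq pd0213).2.2.2.symm
  have d_3_6 : (q 3 : Pl.P) ≠ Dp q 0 3 1 2 := (Dp_ne_q hq pd0312).2.1.symm
  have d_3_7 : (q 3 : Pl.P) ≠ Rp q 0 1 2 3 := (Rp_ne_qk hq pd0123).2.symm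
  have d_3_8 : (q 3 : Pl.P) ≠ Rp q 0 2 1 3 := (Rp_ne_qk hq pd0213).2.symm
  have d_3_9 : (q 3 : Pl.P) ≠ Rp q 0 3 1 2 := (Rp_spec hq pd0312).2.2.1.symm
  have d_3_10 : (q 3 : Pl.P) ≠ Rp q 1 2 0 3 := (Rp_ne_qk hq pd1203).2.symm
  have d_3_11 : (q 3 : Pl.P) ≠ Rp q 1 3 0 2 := (Rp_spec hq pd1302).2.2.1.symm
  have d_3_12 : (q 3 : Pl.P) ≠ Rp q 2 3 0 1 := (Rp_spec hq pd2301).2.2.1.symm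
  have d_4_5 : (Dp q 0 1 2 3 : Pl.P) ≠ Dp q 0 2 1 3 := Dp_ne_Dp hq pd0123
  have d_4_6 : (Dp q 0 1 2 3 : Pl.P) ≠ Dp q 0 3 1 2 := by rw [Dp_symm_right hq pd0123 pd0132]; exact Dp_ne_Dp hq pd0132
  have d_4_7 : (Dp q 0 1 2 3 : Pl.P) ≠ Rp q 0 1 2 3 := (Rp_spec hq pd0123).2.2.2.symm
  have d_4_8 : (Dp q 0 1 2 3 : Pl.P) ≠ Rp q 0 2 1 3 := (Rp_ne_Dp_cross hq pd0213).symm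
  have d_4_9 : (Dp q 0 1 2 3 : Pl.P) ≠ Rp q 0 3 1 2 := by rw [Dp_symm_right hq pd0123 pd0132]; exact (Rp_ne_Dp_cross hq pd0312).symm
  have d_4_10 : (Dp q 0 1 2 3 : Pl.P) ≠ Rp q 1 2 0 3 := by rw [Dp_symm_left hq pd0123 pd1023]; exact (Rp_ne_Dp_cross hq pd1203).symm
  have d_4_11 : (Dp q 0 1 2 3 : Pl.P) ≠ Rp q 1 3 0 2 := by rw [Dp_symm_left hq pd0123 pd1023, Dp_symm_right hq pd1023 pd1032]; exact (Rp_ne_Dp_cross hq pd1302).symm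
  have d_4_12 : (Dp q 0 1 2 3 : Pl.P) ≠ Rp q 2 3 0 1 := by rw [Dp_symm hq pd0123 pd2301]; exact (Rp_spec hq pd2301).2.2.2.symm
  have d_5_6 : (Dp q 0 2 1 3 : Pl.P) ≠ Dp q 0 3 1 2 := by rw [Dp_symm_right hq pd0213 pd0231, Dp_symm_right hq pd0312 pd0321]; exact Dp_ne_Dp hq pd0231
  have d_5_7 : (Dp q 0 2 1 3 : Pl.P) ≠ Rp q 0 1 2 3 := (Rp_ne_Dp_cross hq pd0123).symm
  have d_5_8 : (Dp q 0 2 1 3 : Pl.P) ≠ Rp q 0 2 1 3 := (Rp_spec hq pd0213).2.2.2.symm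
  have d_5_9 : (Dp q 0 2 1 3 : Pl.P) ≠ Rp q 0 3 1 2 := by rw [Dp_symm_right hq pd0213 pd0231, Rp_symm_right hq pd0312]; exact (Rp_ne_Dp_cross hq pd0321).symm
  have d_5_10 : (Dp q 0 2 1 3 : Pl.P) ≠ Rp q 1 2 0 3 := by rw [Dp_symm_left hq pd0213 pd2013, Rp_symm_left hq pd1203]; exact (Rp_ne_Dp_cross hq pd2103).symm
  have d_5_11 : (Dp q 0 2 1 3 : Pl.P) ≠ Rp q 1 3 0 2 := by rw [Dp_symm hq pd0213 pd1302]; exact (Rp_spec hq pd1302).2.2.2.symm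
  have d_5_12 : (Dp q 0 2 1 3 : Pl.P) ≠ Rp q 2 3 0 1 := by rw [Dp_symm_right hq pd0213 pd0231, Dp_symm_left hq pd0231 pd2031]; exact (Rp_ne_Dp_cross hq pd2301).symm
  have d_6_7 : (Dp q 0 3 1 2 : Pl.P) ≠ Rp q 0 1 2 3 := by rw [Rp_symm_right hq pd0123]; exact (Rp_ne_Dp_cross hq pd0132).symm
  have d_6_8 : (Dp q 0 3 1 2 : Pl.P) ≠ Rp q 0 2 1 3 := by rw [Dp_symm_right hq pd0312 pd0321, Rp_symm_right hq pd0213]; exact (Rp_ne_Dp_cross hq pd0231).symm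
  have d_6_9 : (Dp q 0 3 1 2 : Pl.P) ≠ Rp q 0 3 1 2 := (Rp_spec hq pd0312).2.2.2.symm
  have d_6_10 : (Dp q 0 3 1 2 : Pl.P) ≠ Rp q 1 2 0 3 := by rw [Dp_symm hq pd0312 pd1203]; exact (Rp_spec hq pd1203).2.2.2.symm
  have d_6_11 : (Dp q 0 3 1 2 : Pl.P) ≠ Rp q 1 3 0 2 := by rw [Dp_symm_left hq pd0312 pd3012, Rp_symm_left hq pd1302]; exact (Rp_ne_Dp_cross hq pd3102).symm
  have d_6_12 : (Dp q 0 3 1 2 : Pl.P) ≠ Rp q 2 3 0 1 := by rw [Dp_symm_right hq pd0312 pd0321, Dp_symm_left hq pd0321 pd3021, Rp_symm_left hq pd2301]; exact (Rp_ne_Dp_cross hq pd3201).symm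
  have d_7_8 : (Rp q 0 1 2 3 : Pl.P) ≠ Rp q 0 2 1 3 := Rp_ne_Rp_share hq pd0123 pd0213 (by decide)
  have d_7_9 : (Rp q 0 1 2 3 : Pl.P) ≠ Rp q 0 3 1 2 := Rp_ne_Rp_share hq pd0123 pd0312 (by decide)
  have d_7_10 : (Rp q 0 1 2 3 : Pl.P) ≠ Rp q 1 2 0 3 := by rw [Rp_symm_left hq pd0123]; exact Rp_ne_Rp_share hq pd1023 pd1203 (by decide)
  have d_7_11 : (Rp q 0 1 2 3 : Pl.P) ≠ Rp q 1 3 0 2 := by rw [Rp_symm_left hq pd0123]; exact Rp_ne_Rp_share hq pd1023 pd1302 (by decide)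
  have d_7_12 : (Rp q 0 1 2 3 : Pl.P) ≠ Rp q 2 3 0 1 := Rp_ne_Rp_opp hq pd0123 pd2301
  have d_8_9 : (Rp q 0 2 1 3 : Pl.P) ≠ Rp q 0 3 1 2 := Rp_ne_Rp_share hq pd0213 pd0312 (by decide)
  have d_8_10 : (Rp q 0 2 1 3 : Pl.P) ≠ Rp q 1 2 0 3 := by rw [Rp_symm_left hq pd0213, Rp_symm_left hq pd1203]; exact Rp_ne_Rp_share hq pd2013 pd2103 (by decide)
  have d_8_11 : (Rp q 0 2 1 3 : Pl.P) ≠ Rp q 1 3 0 2 := Rp_ne_Rp_opp hq pd0213 pd1302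
  have d_8_12 : (Rp q 0 2 1 3 : Pl.P) ≠ Rp q 2 3 0 1 := by rw [Rp_symm_left hq pd0213]; exact Rp_ne_Rp_share hq pd2013 pd2301 (by decide)
  have d_9_10 : (Rp q 0 3 1 2 : Pl.P) ≠ Rp q 1 2 0 3 := Rp_ne_Rp_opp hq pd0312 pd1203
  have d_9_11 : (Rp q 0 3 1 2 : Pl.P) ≠ Rp q 1 3 0 2 := by rw [Rp_symm_left hq pd0312, Rp_symm_left hq pd1302]; exact Rp_ne_Rp_share hq pd3012 pd3102 (by decide)
  have d_9_12 : (Rp q 0 3 1 2 : Pl.P) ≠ Rp q 2 3 0 1 := by rw [Rp_symm_left hq pd0312, Rp_symm_left hq pd2301]; exact Rp_ne_Rp_share hq pd3012 pd3201 (by decide)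
  have d_10_11 : (Rp q 1 2 0 3 : Pl.P) ≠ Rp q 1 3 0 2 := Rp_ne_Rp_share hq pd1203 pd1302 (by decide)
  have d_10_12 : (Rp q 1 2 0 3 : Pl.P) ≠ Rp q 2 3 0 1 := by rw [Rp_symm_left hq pd1203]; exact Rp_ne_Rp_share hq pd2103 pd2301 (by decide)
  have d_11_12 : (Rp q 1 3 0 2 : Pl.P) ≠ Rp q 2 3 0 1 := by rw [Rp_symm_left hq pd1302, Rp_symm_left hq pd2301]; exact Rp_ne_Rp_share hq pd3102 pd3201 (by decide)
  apply inj_aux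
  intro a b hlt
  fin_cases a <;> fin_cases b <;>
    first | exact absurd hlt (by decide) | (simp only [Npt]; assumption)


/-- the images of the 13 model lines -/
lemma img01 : sec q 0 1 = ({0,1,4,7} : Finset (Fin 13)).image (Npt q) := by
  have pd0123 : PD 0 1 2 3 := by decide
  simp only [Finset.image_insert, Finset.image_singleton]
  rw [sec_eq hq pd0123]; rfl

lemma img02 : sec q 0 2 = ({0,2,5,8} : Finset (Fin 13)).image (Npt q) := by
  have pd : PD 0 2 1 3 := by decide
  simp only [Finset.image_insert, Finset.image_singleton]
  rw [sec_eq hq pd]; rfl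

lemma img03 : sec q 0 3 = ({0,3,6,9} : Finset (Fin 13)).image (Npt q) := by
  have pd : PD 0 3 1 2 := by decide
  simp only [Finset.image_insert, Finset.image_singleton]
  rw [sec_eq hq pd]; rfl

lemma img12 : sec q 1 2 = ({1,2,6,10} : Finset (Fin 13)).image (Npt q) := by
  have pd : PD 1 2 0 3 := by decide
  have pd' : PD 0 3 1 2 := by decide
  simp only [Finset.image_insert, Finset.image_singleton]
  rw [sec_eq hq pd, Dp_symm hq pd pd']; rfl

lemma img13 : sec q 1 3 = ({1,3,5,11} : Finset (Fin 13)).image (Npt q) := by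
  have pd : PD 1 3 0 2 := by decide
  have pd' : PD 0 2 1 3 := by decide
  simp only [Finset.image_insert, Finset.image_singleton]
  rw [sec_eq hq pd, Dp_symm hq pd pd']; rfl

lemma img23 : sec q 2 3 = ({2,3,4,12} : Finset (Fin 13)).image (Npt q) := by
  have pd : PD 2 3 0 1 := by decide
  have pd' : PD 0 1 2 3 := by decide
  simp only [Finset.image_insert, Finset.image_singleton]
  rw [sec_eq hq pd, Dp_symm hq pd pd']; rfl

lemma imgT0 : Tl q 0 1 2 3 = ({0,10,11,12} : Finset (Fin 13)).image (Npt q) := by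
  have pd : PD 0 1 2 3 := by decide
  simp only [Finset.image_insert, Finset.image_singleton]
  show Tl q 0 1 2 3 = ({q 0, Rp q 1 2 0 3, Rp q 1 3 0 2, Rp q 2 3 0 1} : Finset Pl.P)
  rw [Tl_card_mem hq pd]
  ext x; simp only [Finset.mem_insert, Finset.mem_singleton]; tauto

lemma imgT1 : Tl q 1 0 2 3 = ({1,8,9,12} : Finset (Fin 13)).image (Npt q) := by
  have pd : PD 1 0 2 3 := by decide
  have pd2301 : PD 2 3 0 1 := by decide
  simp only [Finset.image_insert, Finset.image_singleton]
  show Tl q 1 0 2 3 = ({q 1, Rp q 0 2 1 3, Rp q 0 3 1 2, Rp q 2 3 0 1} : Finset Pl.P)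
  rw [Tl_card_mem hq pd, ← Rp_symm_right hq pd2301]
  ext x; simp only [Finset.mem_insert, Finset.mem_singleton]; tauto

lemma imgT2 : Tl q 2 0 1 3 = ({2,7,9,11} : Finset (Fin 13)).image (Npt q) := by
  have pd : PD 2 0 1 3 := by decide
  have pd1302 : PD 1 3 0 2 := by decide
  have pd0312 : PD 0 3 1 2 := by decide
  simp only [Finset.image_insert, Finset.image_singleton]
  show Tl q 2 0 1 3 = ({q 2, Rp q 0 1 2 3, Rp q 0 3 1 2, Rp q 1 3 0 2} : Finset Pl.P)
  rw [Tl_card_mem hq pd, ← Rp_symm_right hq pd1302, ← Rp_symm_right hq pd0312]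
  ext x; simp only [Finset.mem_insert, Finset.mem_singleton]; tauto

lemma imgT3 : Tl q 3 0 1 2 = ({3,7,8,10} : Finset (Fin 13)).image (Npt q) := by
  have pd : PD 3 0 1 2 := by decide
  have pd1203 : PD 1 2 0 3 := by decide
  have pd0213 : PD 0 2 1 3 := by decide
  have pd0123 : PD 0 1 2 3 := by decide
  simp only [Finset.image_insert, Finset.image_singleton]
  show Tl q 3 0 1 2 = ({q 3, Rp q 0 1 2 3, Rp q 0 2 1 3, Rp q 1 2 0 3} : Finset Pl.P)
  rw [Tl_card_mem hq pd, ← Rp_symm_right hq pd1203, ← Rp_symm_right hq pd0213,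
    ← Rp_symm_right hq pd0123]
  ext x; simp only [Finset.mem_insert, Finset.mem_singleton]; tauto

lemma imgE1 : El q 0 1 2 3 = ({5,6,7,12} : Finset (Fin 13)).image (Npt q) := by
  have pd : PD 0 1 2 3 := by decide
  simp only [Finset.image_insert, Finset.image_singleton]
  show El q 0 1 2 3 = ({Dp q 0 2 1 3, Dp q 0 3 1 2, Rp q 0 1 2 3, Rp q 2 3 0 1} : Finset Pl.P)
  rw [El_card_mem hq pd]
  ext x; simp only [Finset.mem_insert, Finset.mem_singleton]; tauto

lemma imgE2 : El q 0 2 1 3 = ({4,6,8,11} : Finset (Fin 13)).image (Npt q) := by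
  have pd : PD 0 2 1 3 := by decide
  have pd0312 : PD 0 3 1 2 := by decide
  have pd0321 : PD 0 3 2 1 := by decide
  simp only [Finset.image_insert, Finset.image_singleton]
  show El q 0 2 1 3 = ({Dp q 0 1 2 3, Dp q 0 3 1 2, Rp q 0 2 1 3, Rp q 1 3 0 2} : Finset Pl.P)
  rw [El_card_mem hq pd, ← Dp_symm_right hq pd0312 pd0321]
  ext x; simp only [Finset.mem_insert, Finset.mem_singleton]; tauto

lemma imgE3 : El q 0 3 1 2 = ({4,5,9,10} : Finset (Fin 13)).image (Npt q) := by
  have pd : PD 0 3 1 2 := by decide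
  have pd0123 : PD 0 1 2 3 := by decide
  have pd0132 : PD 0 1 3 2 := by decide
  have pd0213 : PD 0 2 1 3 := by decide
  have pd0231 : PD 0 2 3 1 := by decide
  simp only [Finset.image_insert, Finset.image_singleton]
  show El q 0 3 1 2 = ({Dp q 0 1 2 3, Dp q 0 2 1 3, Rp q 0 3 1 2, Rp q 1 2 0 3} : Finset Pl.P)
  rw [El_card_mem hq pd, ← Dp_symm_right hq pd0123 pd0132, ← Dp_symm_right hq pd0213 pd0231]
  ext x; simp only [Finset.mem_insert, Finset.mem_singleton]; tauto

end Oval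

/-- the model line set -/
def MS : Finset (Finset (Fin 13)) :=
  {{0,1,4,7},{0,2,5,8},{0,3,6,9},{1,2,6,10},{1,3,5,11},{2,3,4,12},
   {0,10,11,12},{1,8,9,12},{2,7,9,11},{3,7,8,10},
   {5,6,7,12},{4,6,8,11},{4,5,9,10}}

section Oval2
variable {q : Fin 4 → Pl.P} (hq : IsOrderedOval Pl q)
include hq

lemma L_eq : Pl.L = MS.image (fun m => m.image (Npt q)) := by
  have himg : MS.image (fun m => m.image (Npt q)) ⊆ Pl.L := by
    intro s hs
    simp only [MS, Finset.mem_image, Finset.mem_insert, Finset.mem_singleton] at hs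
    obtain ⟨m, hm, rfl⟩ := hs
    rcases hm with rfl|rfl|rfl|rfl|rfl|rfl|rfl|rfl|rfl|rfl|rfl|rfl|rfl
    · rw [← img01 hq]; exact sec_mem_L hq (by decide)
    · rw [← img02 hq]; exact sec_mem_L hq (by decide)
    · rw [← img03 hq]; exact sec_mem_L hq (by decide)
    · rw [← img12 hq]; exact sec_mem_L hq (by decide)
    · rw [← img13 hq]; exact sec_mem_L hq (by decide)
    · rw [← img23 hq]; exact sec_mem_L hq (by decide)
    · rw [← imgT0 hq]; exact Tl_mem_L hq (by decide)
    · rw [← imgT1 hq]; exact Tl_mem_L hq (by decide)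
    · rw [← imgT2 hq]; exact Tl_mem_L hq (by decide)
    · rw [← imgT3 hq]; exact Tl_mem_L hq (by decide)
    · rw [← imgE1 hq]; exact El_mem_L hq (by decide)
    · rw [← imgE2 hq]; exact El_mem_L hq (by decide)
    · rw [← imgE3 hq]; exact El_mem_L hq (by decide)
  have hcard : (MS.image (fun m => m.image (Npt q))).card = 13 := by
    rw [Finset.card_image_of_injective _ (Finset.image_injective (Npt_inj hq))]
    decide
  refine (Finset.eq_of_subset_of_card_le himg ?_).symm
  rw [hcard, Pl.cardL]; norm_num

lemma Npt_surj : Function.Surjective (Npt q) := by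
  intro x
  have h4 := Pl.point_lines x
  have hne : (Pl.L.filter (fun l => x ∈ l)).Nonempty := by
    rw [← Finset.card_pos, h4]; norm_num
  obtain ⟨l, hl⟩ := hne
  rw [Finset.mem_filter] at hl
  have hl1 := hl.1
  rw [L_eq hq] at hl1
  obtain ⟨m, _, rfl⟩ := Finset.mem_image.mp hl1
  obtain ⟨idx, _, hidx⟩ := Finset.mem_image.mp hl.2
  exact ⟨idx, hidx⟩

end Oval2
end PP

open PP in
/-- Given ordered ovals in two projective planes of order 3, there is a
unique isomorphism (line-preserving bijection) carrying one to the other;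
in particular any two projective planes of order 3 are isomorphic. -/
theorem stmt2 (Pl₁ Pl₂ : ProjPlane 3) (q : Fin 4 → Pl₁.P) (q' : Fin 4 → Pl₂.P)
    (hq : IsOrderedOval Pl₁ q) (hq' : IsOrderedOval Pl₂ q') :
    ∃! f : Pl₁.P ≃ Pl₂.P,
      (∀ s : Finset Pl₁.P, s ∈ Pl₁.L ↔ s.image f ∈ Pl₂.L) ∧
      (∀ i, f (q i) = q' i) := by
  classical
  let E₁ : Fin 13 ≃ Pl₁.P := Equiv.ofBijective _ ⟨Npt_inj hq, Npt_surj hq⟩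
  let E₂ : Fin 13 ≃ Pl₂.P := Equiv.ofBijective _ ⟨Npt_inj hq', Npt_surj hq'⟩
  have hfN : ∀ idx : Fin 13, (E₁.symm.trans E₂) (Npt q idx) = Npt q' idx := by
    intro idx
    have h1 : E₁.symm (Npt q idx) = idx := by
      rw [Equiv.symm_apply_eq]; rfl
    show E₂ (E₁.symm (Npt q idx)) = Npt q' idx
    rw [h1]; rfl
  have hcomp : ∀ m : Finset (Fin 13),
      (m.image (Npt q)).image (E₁.symm.trans E₂) = m.image (Npt q') := by
    intro m
    rw [Finset.image_image]
    exact Finset.image_congr (fun idx _ => hfN idx)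
  refine ⟨E₁.symm.trans E₂, ⟨?_, ?_⟩, ?_⟩
  · intro s
    constructor
    · intro hs
      rw [L_eq hq] at hs
      obtain ⟨m, hm, rfl⟩ := Finset.mem_image.mp hs
      rw [hcomp m, L_eq hq']
      exact Finset.mem_image_of_mem _ hm
    · intro hs
      rw [L_eq hq'] at hs
      obtain ⟨m, hm, heq⟩ := Finset.mem_image.mp hs
      have hcast := congrArg (Finset.image (E₁.symm.trans E₂).symm) heq
      rw [Finset.image_image, Finset.image_image] at hcast
      have hl : s.image (⇑(E₁.symm.trans E₂).symm ∘ ⇑(E₁.symm.trans E₂)) = s := by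
        rw [show (⇑(E₁.symm.trans E₂).symm ∘ ⇑(E₁.symm.trans E₂)) = id from
          funext fun x => (E₁.symm.trans E₂).symm_apply_apply x, Finset.image_id]
      have hr : m.image (⇑(E₁.symm.trans E₂).symm ∘ (Npt q')) = m.image (Npt q) :=
        Finset.image_congr (fun idx _ => by
          show (E₁.symm.trans E₂).symm (Npt q' idx) = Npt q idx
          rw [← hfN idx, Equiv.symm_apply_apply])
      rw [hl, hr] at hcast
      rw [L_eq hq, ← hcast]
      exact Finset.mem_image_of_mem _ hm
  · intro i
    fin_cases i
    · exact hfN 0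
    · exact hfN 1
    · exact hfN 2
    · exact hfN 3
  · rintro g ⟨hg1, hg2⟩
    have hgsec : ∀ a b : Fin 4, a ≠ b → (sec q a b).image g = sec q' a b := by
      intro a b hab
      refine (sec_unique hq' hab ((hg1 _).mp (sec_mem_L hq hab)) ?_ ?_)
      · rw [← hg2 a]; exact Finset.mem_image_of_mem _ (q_mem_sec_left hq hab)
      · rw [← hg2 b]; exact Finset.mem_image_of_mem _ (q_mem_sec_right hq hab)
    have hgD : ∀ a b c d : Fin 4, PD a b c d → g (Dp q a b c d) = Dp q' a b c d := by
      intro a b c d h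
      refine eq_Dp hq' h ?_ ?_
      · rw [← hgsec a b h.1]; exact Finset.mem_image_of_mem _ (Dp_mem hq h).1
      · rw [← hgsec c d h.2.2.2.2.2]; exact Finset.mem_image_of_mem _ (Dp_mem hq h).2
    have hgR : ∀ a b c d : Fin 4, PD a b c d → g (Rp q a b c d) = Rp q' a b c d := by
      intro a b c d h
      have hmem : g (Rp q a b c d) ∈ sec q' a b := by
        rw [← hgsec a b h.1]; exact Finset.mem_image_of_mem _ (Rp_spec hq h).1
      rcases mem_sec_cases hq' h hmem with e | e | e | e
      · rw [← hg2 a] at e; exact absurd (g.injective e) (Rp_spec hq h).2.1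
      · rw [← hg2 b] at e; exact absurd (g.injective e) (Rp_spec hq h).2.2.1
      · rw [← hgD a b c d h] at e; exact absurd (g.injective e) (Rp_spec hq h).2.2.2
      · exact e
    have hgN : ∀ idx : Fin 13, g (Npt q idx) = Npt q' idx := by
      intro idx
      fin_cases idx
      · exact hg2 0
      · exact hg2 1
      · exact hg2 2
      · exact hg2 3
      · exact hgD 0 1 2 3 (by decide)
      · exact hgD 0 2 1 3 (by decide)
      · exact hgD 0 3 1 2 (by decide)
      · exact hgR 0 1 2 3 (by decide)
      · exact hgR 0 2 1 3 (by decide)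
      · exact hgR 0 3 1 2 (by decide)
      · exact hgR 1 2 0 3 (by decide)
      · exact hgR 1 3 0 2 (by decide)
      · exact hgR 2 3 0 1 (by decide)
    apply Equiv.ext
    intro x
    obtain ⟨idx, rfl⟩ := Npt_surj hq x
    rw [hgN idx, hfN idx]
end

section
/- Let C be the F₃-linear span of the characteristic vectors h_ℓ of the lines of the projective plane of order 3, inside the 13-dimensional space F₃^P indexed by points. Then for any c, d ∈ C, the sum over points p of c_p·d_p equals the product (Σ_p c_p)·(Σ_p d_p). -/
/-- The characteristic vector of a line. -/
def lineVec (Pl : ProjPlane 3) (ℓ : Finset Pl.P) : Pl.P → ZMod 3 :=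
  fun p => if p ∈ ℓ then 1 else 0

/-- The F₃-span of the characteristic vectors of the lines. -/
def lineCode (Pl : ProjPlane 3) : Submodule (ZMod 3) (Pl.P → ZMod 3) :=
  Submodule.span (ZMod 3) (lineVec Pl '' ↑Pl.L)

/-- The weight of a codeword: its number of nonzero coordinates. -/
def wt {Pl : ProjPlane 3} (c : Pl.P → ZMod 3) : ℕ :=
  (Finset.univ.filter fun p => c p ≠ 0).card

/-- For `c, d` in the line-span code `C`, `Σ_p c_p d_p = (Σ_p c_p)(Σ_p d_p)`. -/
theorem stmt5 (Pl : ProjPlane 3) (c d : Pl.P → ZMod 3)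
    (hc : c ∈ lineCode Pl) (hd : d ∈ lineCode Pl) :
    ∑ p, c p * d p = (∑ p, c p) * (∑ p, d p) := by
  have hsumline : ∀ ℓ ∈ Pl.L, (∑ p, lineVec Pl ℓ p) = 1 := by
    intro ℓ hℓ
    simp only [lineVec]
    rw [Finset.sum_ite_mem, Finset.univ_inter, Finset.sum_const, Pl.line_card ℓ hℓ]
    decide
  have hgen : ∀ ℓ ∈ Pl.L, ∀ m ∈ Pl.L,
      (∑ p, lineVec Pl ℓ p * lineVec Pl m p) = 1 := by
    intro ℓ hℓ m hm
    have : (∑ p, lineVec Pl ℓ p * lineVec Pl m p) = ((ℓ ∩ m).card : ZMod 3) := by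
      have step : ∀ p : Pl.P, lineVec Pl ℓ p * lineVec Pl m p
          = if p ∈ ℓ ∩ m then (1 : ZMod 3) else 0 := by
        intro p
        simp only [lineVec, Finset.mem_inter]
        by_cases h1 : p ∈ ℓ <;> by_cases h2 : p ∈ m <;> simp [h1, h2]
      simp only [step]
      rw [Finset.sum_ite_mem, Finset.univ_inter, Finset.sum_const, nsmul_eq_mul, mul_one]
    rw [this]
    rcases eq_or_ne ℓ m with rfl | hne
    · rw [Finset.inter_self, Pl.line_card ℓ hℓ]; decide
    · rw [Pl.lines_meet ℓ hℓ m hm hne]; decide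
  -- inner lemma: fixed generator against arbitrary d
  have key : ∀ c ∈ lineCode Pl, (∑ p, c p * d p) = (∑ p, c p) * (∑ p, d p) := by
    intro c hc
    induction hc using Submodule.span_induction with
    | mem x hx =>
      obtain ⟨ℓ, hℓ, rfl⟩ := hx
      rw [hsumline ℓ hℓ, one_mul]
      induction hd using Submodule.span_induction with
      | mem y hy =>
        obtain ⟨m, hm, rfl⟩ := hy
        rw [hsumline m hm, hgen ℓ hℓ m hm]
      | zero => simp
      | add y z _ _ hy hz =>
        simp only [Pi.add_apply, mul_add, Finset.sum_add_distrib, hy, hz]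
      | smul a y _ hy =>
        simp only [Pi.smul_apply, smul_eq_mul, mul_left_comm, ← Finset.mul_sum, hy]
    | zero => simp
    | add y z _ _ hy hz =>
      simp only [Pi.add_apply, add_mul, Finset.sum_add_distrib, hy, hz]
    | smul a y _ hy =>
      simp only [Pi.smul_apply, smul_eq_mul, mul_assoc, ← Finset.mul_sum, hy]
  exact key c hc
end

section
/- Every codeword c in the span C of the line vectors of the projective plane of order 3 has weight congruent to 0 or 1 modulo 3. -/
/-! Over `𝔽₃` every nonzero `x` has `x² = 1`, so `wt c ≡ c ⬝ᵥ c (mod 3)`. Two lines meet in one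
point (or in `4 ≡ 1` points if they coincide), so the dot product of any two line vectors is `1`.
By bilinearity, `c ⬝ᵥ d = (c ⬝ᵥ ℓ₀) (d ⬝ᵥ ℓ₀)` on the code for any fixed line `ℓ₀`; hence
`c ⬝ᵥ c` is a square in `𝔽₃`, i.e. `0` or `1`. -/

open Finset Matrix

theorem LinearMap.apply_eq_mul_of_mem_span {R M : Type*} [CommSemiring R] [AddCommMonoid M]
    [Module R M] (B : M →ₗ[R] M →ₗ[R] R) {s : Set M} (hs : ∀ u ∈ s, ∀ w ∈ s, B u w = 1)
    {v₀ : M} (hv₀ : v₀ ∈ s) {c d : M} (hc : c ∈ Submodule.span R s)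
    (hd : d ∈ Submodule.span R s) : B c d = B c v₀ * B v₀ d := by
  set B' : M →ₗ[R] M →ₗ[R] R := (LinearMap.mul R R).compl₁₂ (B.flip v₀) (B v₀)
  have hB' : ∀ x y, B' x y = B x v₀ * B v₀ y := fun _ _ => rfl
  have h_left : ∀ u ∈ s, B u d = B' u d := fun u hu =>
    LinearMap.eqOn_span (fun w hw => by
      simp only [hB', hs u hu w hw, hs u hu v₀ hv₀, hs v₀ hv₀ w hw, mul_one]) hd
  have := LinearMap.eqOn_span (f := B.flip d) (g := B'.flip d) h_left hc
  simpa only [flip_apply, hB'] using this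

theorem ZMod.natCast_card_filter_ne_zero_eq_dotProduct_self {ι : Type*} [Fintype ι]
    (c : ι → ZMod 3) : ((univ.filter fun p => c p ≠ 0).card : ZMod 3) = c ⬝ᵥ c := by
  have hsq : ∀ x : ZMod 3, x * x = if x ≠ 0 then 1 else 0 := by decide
  simp only [dotProduct, hsq, sum_boole]

theorem lineVec_dotProduct (Pl : ProjPlane 3) (ℓ m : Finset Pl.P) :
    lineVec Pl ℓ ⬝ᵥ lineVec Pl m = (ℓ ∩ m).card := by
  simp only [dotProduct, lineVec, mul_ite, mul_one, mul_zero, ← ite_and, sum_boole]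
  congr 2
  ext p
  simp [and_comm]

theorem lineVec_dotProduct_of_mem (Pl : ProjPlane 3) {ℓ m : Finset Pl.P} (hℓ : ℓ ∈ Pl.L)
    (hm : m ∈ Pl.L) : lineVec Pl ℓ ⬝ᵥ lineVec Pl m = 1 := by
  rw [lineVec_dotProduct]
  obtain rfl | hne := eq_or_ne ℓ m
  · rw [inter_self, Pl.line_card ℓ hℓ]
    decide
  · rw [Pl.lines_meet ℓ hℓ m hm hne]
    decide

/-- Every codeword of `C` has weight ≡ 0 or 1 (mod 3). -/
theorem stmt6 (Pl : ProjPlane 3) (c : Pl.P → ZMod 3) (hc : c ∈ lineCode Pl) :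
    wt c % 3 = 0 ∨ wt c % 3 = 1 := by
  obtain ⟨ℓ₀, hℓ₀⟩ : Pl.L.Nonempty := card_pos.mp (by rw [Pl.cardL]; norm_num)
  have hdot : ∀ u ∈ lineVec Pl '' Pl.L, ∀ w ∈ lineVec Pl '' Pl.L,
      dotProductBilin (ZMod 3) (ZMod 3) u w = 1 := by
    rintro _ ⟨ℓ, hℓ, rfl⟩ _ ⟨m, hm, rfl⟩
    exact lineVec_dotProduct_of_mem Pl hℓ hm
  have hsq : c ⬝ᵥ c = (c ⬝ᵥ lineVec Pl ℓ₀) ^ 2 := by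
    have := (dotProductBilin (ZMod 3) (ZMod 3)).apply_eq_mul_of_mem_span hdot
      ⟨ℓ₀, hℓ₀, rfl⟩ hc hc
    simpa only [sq, dotProductBilin_apply_apply, dotProduct_comm (lineVec Pl ℓ₀) c] using this
  have hwt : wt c % 3 = ((c ⬝ᵥ lineVec Pl ℓ₀) ^ 2).val := by
    rw [← hsq, ← ZMod.natCast_card_filter_ne_zero_eq_dotProduct_self, ZMod.val_natCast]
    rfl
  have hval_sq : ∀ t : ZMod 3, (t ^ 2).val = 0 ∨ (t ^ 2).val = 1 := by decide
  exact hwt ▸ hval_sq _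
end

section
/- For a codeword c in the line-span C of the projective plane of order 3, the coordinate-sum Σ_{p∈P} c_p is zero if and only if the weight of c is divisible by 3. -/
lemma indic_sum {P : Type} [Fintype P] [DecidableEq P] (s : Finset P) :
    (∑ p : P, (if p ∈ s then (1 : ZMod 3) else 0)) = (s.card : ZMod 3) := by
  rw [Finset.sum_boole]
  congr 1
  simp [Finset.filter_mem_eq_inter]

lemma key (Pl : ProjPlane 3) {c d : Pl.P → ZMod 3} (hc : c ∈ lineCode Pl)
    (hd : d ∈ lineCode Pl) :
    ∑ p, c p * d p = (∑ p, c p) * (∑ p, d p) := by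
  induction hc, hd using Submodule.span_induction₂ with
  | mem_mem x y hx hy =>
    obtain ⟨ℓ, hℓ, rfl⟩ := hx
    obtain ⟨m, hm, rfl⟩ := hy
    have h1 : ∀ p, lineVec Pl ℓ p * lineVec Pl m p =
        if p ∈ ℓ ∩ m then (1 : ZMod 3) else 0 := by
      intro p
      simp only [lineVec, Finset.mem_inter]
      by_cases h : p ∈ ℓ <;> by_cases h' : p ∈ m <;> simp [h, h']
    simp only [lineVec] at h1 ⊢
    rw [Finset.sum_congr rfl fun p _ => h1 p, indic_sum, indic_sum, indic_sum]
    by_cases h : ℓ = m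
    · subst h
      rw [Finset.inter_self, Pl.line_card ℓ hℓ]
      decide
    · rw [Pl.lines_meet ℓ hℓ m hm h, Pl.line_card ℓ hℓ, Pl.line_card m hm]
      decide
  | zero_left y hy => simp
  | zero_right x hx => simp
  | add_left x y z hx hy hz h1 h2 =>
    simp only [Pi.add_apply, add_mul, Finset.sum_add_distrib, h1, h2]
  | add_right x y z hx hy hz h1 h2 =>
    simp only [Pi.add_apply, mul_add, Finset.sum_add_distrib, h1, h2]
  | smul_left r x y hx hy h =>
    simp only [Pi.smul_apply, smul_eq_mul]
    have e : ∑ p, r * x p * y p = r * ∑ p, x p * y p := by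
      rw [Finset.mul_sum]; exact Finset.sum_congr rfl fun p _ => by ring
    rw [e, h, ← Finset.mul_sum]; ring
  | smul_right r x y hx hy h =>
    simp only [Pi.smul_apply, smul_eq_mul]
    have e : ∑ p, x p * (r * y p) = r * ∑ p, x p * y p := by
      rw [Finset.mul_sum]; exact Finset.sum_congr rfl fun p _ => by ring
    rw [e, h, ← Finset.mul_sum]; ring

/-- For `c ∈ C`, the coordinate sum vanishes iff `3 ∣ wt c`. -/
theorem stmt7 (Pl : ProjPlane 3) (c : Pl.P → ZMod 3) (hc : c ∈ lineCode Pl) :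
    (∑ p, c p) = 0 ↔ 3 ∣ wt c := by
  have hsq : ∑ p, c p * c p = (∑ p, c p) * (∑ p, c p) := key Pl hc hc
  have hw : ∑ p, c p * c p = (wt c : ZMod 3) := by
    have : ∀ p, c p * c p = if c p ≠ 0 then (1 : ZMod 3) else 0 := by
      intro p; generalize c p = x; revert x; decide
    rw [Finset.sum_congr rfl fun p _ => this p, Finset.sum_boole]
    rfl
  have h3 : (3 : ℕ) ∣ wt c ↔ (wt c : ZMod 3) = 0 :=
    (ZMod.natCast_eq_zero_iff _ _).symm
  rw [h3, ← hw, hsq]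
  constructor
  · intro h; rw [h, mul_zero]
  · intro h; exact pow_eq_zero_iff (n := 2) (by norm_num) |>.mp (by rw [pow_two]; exact h)
end

section
/- The subcode C' = {c ∈ C : Σ_p c_p = 0} of the line-span C of the projective plane of order 3 equals the orthogonal complement of C with respect to the standard scalar product on F₃^P. -/
/-! Lift `w` to an integer vector `W`. If `w` is orthogonal to every line, each line sum of `W`
is `3 u_ℓ`, and the identity `Nᵀ N = 3 I + J` for the line–point incidence matrix `N` gives
`3 W = 3 Nᵀ u - (Σ W) 𝟙`. Hence `Σ W = 3 t` and `w ≡ Nᵀ u - t 𝟙 (mod 3)`, which lies in `C`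
because `𝟙 = Σ_ℓ ℓ` (every point is on `4 ≡ 1` lines). Conversely, two lines meet in `1` or
`4 ≡ 1` points, so `c · ℓ = Σ_p c_p` for every `c ∈ C`: this gives `C' ⊆ C^⊥`, and also
`Σ_p w_p = 0` once `w ∈ C ∩ C^⊥` is known. -/

open Finset

namespace ProjPlane

variable {n : ℕ} (Pl : ProjPlane n)

theorem card_lines_through_pair {p q : Pl.P} (hpq : p ≠ q) :
    #{ℓ ∈ Pl.L | p ∈ ℓ ∧ q ∈ ℓ} = 1 := by
  obtain ⟨ℓ, hℓ, huniq⟩ := Pl.unique_line p q hpq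
  rw [card_eq_one]
  exact ⟨ℓ, ext fun m => by simpa [mem_filter] using ⟨huniq m, fun h => h ▸ hℓ⟩⟩

/-- The incidence matrix `N` of the plane satisfies `Nᵀ N = n I + J`. -/
theorem sum_lines_through_sum_line {M : Type*} [AddCommMonoid M] (f : Pl.P → M) (p : Pl.P) :
    ∑ ℓ ∈ Pl.L with p ∈ ℓ, ∑ q ∈ ℓ, f q = n • f p + ∑ q, f q := by
  have hcount : ∀ q, #{ℓ ∈ Pl.L | p ∈ ℓ ∧ q ∈ ℓ} = if q = p then n + 1 else 1 := by
    intro q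
    split_ifs with hqp
    · subst hqp; simpa using Pl.point_lines q
    · exact Pl.card_lines_through_pair (Ne.symm hqp)
  calc ∑ ℓ ∈ Pl.L with p ∈ ℓ, ∑ q ∈ ℓ, f q
      = ∑ q, ∑ ℓ ∈ Pl.L with p ∈ ℓ ∧ q ∈ ℓ, f q :=
        sum_comm' fun ℓ q => by simp [mem_filter, and_assoc]
    _ = ∑ q, (f q + if q = p then n • f p else 0) := by
        refine sum_congr rfl fun q _ => ?_
        rw [sum_const, hcount]
        split_ifs with hqp
        · rw [hqp, succ_nsmul']
        · rw [one_nsmul, add_zero]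
    _ = n • f p + ∑ q, f q := by rw [sum_add_distrib, sum_ite_eq', if_pos (mem_univ p), add_comm]

end ProjPlane

section OrderThree

variable (Pl : ProjPlane 3)

theorem sum_mul_lineVec (c : Pl.P → ZMod 3) (ℓ : Finset Pl.P) :
    ∑ p, c p * lineVec Pl ℓ p = ∑ p ∈ ℓ, c p := by
  simp [lineVec, mul_ite, sum_ite_mem]

theorem sum_lineVec_apply_eq_one (p : Pl.P) : ∑ ℓ ∈ Pl.L, lineVec Pl ℓ p = 1 := by
  simp only [lineVec, sum_boole, Pl.point_lines p]
  rfl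

theorem lineVec_mem_lineCode {ℓ : Finset Pl.P} (hℓ : ℓ ∈ Pl.L) : lineVec Pl ℓ ∈ lineCode Pl :=
  Submodule.subset_span ⟨ℓ, hℓ, rfl⟩

theorem one_mem_lineCode : (1 : Pl.P → ZMod 3) ∈ lineCode Pl := by
  have h : (1 : Pl.P → ZMod 3) = ∑ ℓ ∈ Pl.L, lineVec Pl ℓ := by
    ext p; rw [Finset.sum_apply, sum_lineVec_apply_eq_one]; rfl
  rw [h]
  exact Submodule.sum_mem _ fun ℓ hℓ => lineVec_mem_lineCode Pl hℓ

theorem sum_line_eq_sum_of_mem_lineCode {c : Pl.P → ZMod 3} (hc : c ∈ lineCode Pl)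
    {m : Finset Pl.P} (hm : m ∈ Pl.L) : ∑ p ∈ m, c p = ∑ p, c p := by
  induction hc using Submodule.span_induction with
  | mem v hv =>
    obtain ⟨ℓ, hℓ, rfl⟩ := hv
    have hmeet : (#(m ∩ ℓ) : ZMod 3) = #ℓ := by
      by_cases hmℓ : m = ℓ
      · rw [hmℓ, inter_self]
      · rw [Pl.lines_meet m hm ℓ hℓ hmℓ, Pl.line_card ℓ hℓ]; rfl
    simpa [lineVec, sum_boole, filter_mem_eq_inter] using hmeet
  | zero => simp
  | add a b _ _ ha hb => simp only [Pi.add_apply, sum_add_distrib, ha, hb]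
  | smul r a _ ha => simp only [Pi.smul_apply, smul_eq_mul, ← mul_sum, ha]

theorem forall_mem_lineCode_sum_mul_eq_zero_iff (w : Pl.P → ZMod 3) :
    (∀ c ∈ lineCode Pl, ∑ p, w p * c p = 0) ↔ ∀ ℓ ∈ Pl.L, ∑ p ∈ ℓ, w p = 0 := by
  refine ⟨fun h ℓ hℓ => sum_mul_lineVec Pl w ℓ ▸ h _ (lineVec_mem_lineCode Pl hℓ), fun h c hc => ?_⟩
  induction hc using Submodule.span_induction with
  | mem v hv =>
    obtain ⟨ℓ, hℓ, rfl⟩ := hv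
    rw [sum_mul_lineVec, h ℓ hℓ]
  | zero => simp
  | add a b _ _ ha hb => simp only [Pi.add_apply, mul_add, sum_add_distrib, ha, hb, add_zero]
  | smul r a _ ha => simp only [Pi.smul_apply, smul_eq_mul, mul_left_comm, ← mul_sum, ha, mul_zero]

theorem mem_lineCode_of_sum_line_eq_zero {w : Pl.P → ZMod 3}
    (hw : ∀ ℓ ∈ Pl.L, ∑ p ∈ ℓ, w p = 0) : w ∈ lineCode Pl := by
  set W : Pl.P → ℤ := fun p => (w p).val
  have hW : ∀ p, (W p : ZMod 3) = w p := fun p => by simp [W]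
  have hdvd : ∀ ℓ ∈ Pl.L, ((3 : ℕ) : ℤ) ∣ ∑ p ∈ ℓ, W p := fun ℓ hℓ => by
    rw [← ZMod.intCast_zmod_eq_zero_iff_dvd]
    push_cast [hW]
    exact hw ℓ hℓ
  choose! u hu using hdvd
  have hgram : ∀ p, ∑ q, W q = 3 * (∑ ℓ ∈ Pl.L with p ∈ ℓ, u ℓ - W p) := fun p => by
    have := Pl.sum_lines_through_sum_line W p
    rw [sum_congr rfl fun ℓ hℓ => hu ℓ (mem_filter.mp hℓ).1, ← mul_sum] at this
    simp only [nsmul_eq_mul, Nat.cast_ofNat] at this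
    linear_combination -this
  obtain ⟨p₀⟩ : Nonempty Pl.P := Fintype.card_pos_iff.mp (by rw [Pl.cardP]; norm_num)
  set t := ∑ ℓ ∈ Pl.L with p₀ ∈ ℓ, u ℓ - W p₀
  have hw_eq : w = ∑ ℓ ∈ Pl.L, (u ℓ : ZMod 3) • lineVec Pl ℓ - (t : ZMod 3) • 1 := by
    ext p
    have hp : W p = ∑ ℓ ∈ Pl.L with p ∈ ℓ, u ℓ - t := by linarith [hgram p, hgram p₀]
    rw [← hW, hp]
    simp [lineVec, sum_filter]
  rw [hw_eq]
  refine sub_mem (Submodule.sum_mem _ fun ℓ hℓ => ?_) (Submodule.smul_mem _ _ (one_mem_lineCode Pl))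
  exact Submodule.smul_mem _ _ (lineVec_mem_lineCode Pl hℓ)

end OrderThree

/-- `C' = {c ∈ C : Σ c_p = 0}` equals the orthogonal complement of `C`. -/
theorem stmt9 (Pl : ProjPlane 3) (w : Pl.P → ZMod 3) :
    (w ∈ lineCode Pl ∧ ∑ p, w p = 0) ↔
      (∀ c ∈ lineCode Pl, ∑ p, w p * c p = 0) := by
  rw [forall_mem_lineCode_sum_mul_eq_zero_iff]
  constructor
  · rintro ⟨hw, hsum⟩ ℓ hℓ
    rw [sum_line_eq_sum_of_mem_lineCode Pl hw hℓ, hsum]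
  · intro h
    have hw := mem_lineCode_of_sum_line_eq_zero Pl h
    obtain ⟨m, hm⟩ : Pl.L.Nonempty := card_pos.mp (by rw [Pl.cardL]; norm_num)
    exact ⟨hw, sum_line_eq_sum_of_mem_lineCode Pl hw hm ▸ h m hm⟩
end

section
/- The F₃-span C of the characteristic vectors of the 13 lines of the projective plane of order 3 has dimension 7, and its subcode C' of codewords with zero coordinate-sum has dimension 6. -/
/-- The coordinate-sum linear functional. -/
def sumMap (Pl : ProjPlane 3) : (Pl.P → ZMod 3) →ₗ[ZMod 3] ZMod 3 where
  toFun c := ∑ p, c p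
  map_add' c d := by simp [Finset.sum_add_distrib]
  map_smul' r c := by simp [Finset.mul_sum]

namespace PP
open Finset Module

variable (Pl : ProjPlane 3)

lemma eq_line {a b : Pl.P} (hab : a ≠ b) {ℓ m : Finset Pl.P} (hℓ : ℓ ∈ Pl.L) (hm : m ∈ Pl.L)
    (h1 : a ∈ ℓ) (h2 : b ∈ ℓ) (h3 : a ∈ m) (h4 : b ∈ m) : ℓ = m := by
  obtain ⟨n, -, hu⟩ := Pl.unique_line a b hab
  rw [hu ℓ ⟨hℓ, h1, h2⟩, hu m ⟨hm, h3, h4⟩]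

lemma meet_unique_s10 {ℓ m : Finset Pl.P} (hℓ : ℓ ∈ Pl.L) (hm : m ∈ Pl.L) (hne : ℓ ≠ m)
    {a b : Pl.P} (ha1 : a ∈ ℓ) (ha2 : a ∈ m) (hb1 : b ∈ ℓ) (hb2 : b ∈ m) : a = b := by
  have h1 := Pl.lines_meet ℓ hℓ m hm hne
  rw [Finset.card_eq_one] at h1
  obtain ⟨x, hx⟩ := h1
  have h2 : a ∈ ℓ ∩ m := Finset.mem_inter.2 ⟨ha1, ha2⟩
  have h3 : b ∈ ℓ ∩ m := Finset.mem_inter.2 ⟨hb1, hb2⟩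
  rw [hx, Finset.mem_singleton] at h2 h3
  rw [h2, h3]

noncomputable def dotL : (Pl.P → ZMod 3) →ₗ[ZMod 3] (Pl.P → ZMod 3) →ₗ[ZMod 3] ZMod 3 :=
  LinearMap.mk₂ (ZMod 3) (fun v w => ∑ p, v p * w p)
    (fun v v' w => by simp [add_mul, Finset.sum_add_distrib])
    (fun a v w => by simp [Finset.mul_sum, mul_assoc])
    (fun v w w' => by simp [mul_add, Finset.sum_add_distrib])
    (fun a v w => by simp [Finset.mul_sum, mul_left_comm])

lemma dotL_apply (v w : Pl.P → ZMod 3) : dotL Pl v w = ∑ p, v p * w p := rfl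

lemma dotL_comm (v w : Pl.P → ZMod 3) : dotL Pl v w = dotL Pl w v := by
  simp [dotL_apply, mul_comm]

lemma dotL_inj : Function.Injective (dotL Pl) := by
  intro x y h
  funext p
  have h1 := congrFun (congrArg (fun f => (f : _ →ₗ[ZMod 3] _).toFun) h) (Pi.single p 1)
  simpa [dotL_apply, Pi.single_apply, mul_ite, Finset.sum_ite_eq'] using h1

lemma sum_lineVec {ℓ : Finset Pl.P} (hℓ : ℓ ∈ Pl.L) : sumMap Pl (lineVec Pl ℓ) = 1 := by
  have : sumMap Pl (lineVec Pl ℓ) = ((ℓ.card : ℕ) : ZMod 3) := by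
    simp [sumMap, lineVec, Finset.sum_ite_mem, LinearMap.coe_mk, AddHom.coe_mk]
  rw [this, Pl.line_card ℓ hℓ]
  decide

lemma dot_lineVec {ℓ m : Finset Pl.P} (hℓ : ℓ ∈ Pl.L) (hm : m ∈ Pl.L) :
    dotL Pl (lineVec Pl ℓ) (lineVec Pl m) = 1 := by
  have key : dotL Pl (lineVec Pl ℓ) (lineVec Pl m) = (((ℓ ∩ m).card : ℕ) : ZMod 3) := by
    rw [dotL_apply]
    have h1 : ∀ p : Pl.P, lineVec Pl ℓ p * lineVec Pl m p
        = if p ∈ ℓ ∩ m then (1 : ZMod 3) else 0 := by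
      intro p
      by_cases h1 : p ∈ ℓ <;> by_cases h2 : p ∈ m <;> simp [lineVec, h1, h2]
    simp only [h1, Finset.sum_ite_mem, Finset.univ_inter, Finset.sum_const, nsmul_eq_mul, mul_one]
  by_cases h : ℓ = m
  · subst h
    rw [Finset.inter_self] at key
    rw [key, Pl.line_card ℓ hℓ]
    decide
  · rw [key, Pl.lines_meet ℓ hℓ m hm h]
    decide


lemma code_dot_eq_sum {m : Finset Pl.P} (hm : m ∈ Pl.L) {x : Pl.P → ZMod 3}
    (hx : x ∈ lineCode Pl) : dotL Pl (lineVec Pl m) x = sumMap Pl x := by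
  have hle : lineCode Pl ≤ LinearMap.ker (dotL Pl (lineVec Pl m) - sumMap Pl) := by
    apply Submodule.span_le.2
    rintro y ⟨ℓ, hℓ, rfl⟩
    simp only [SetLike.mem_coe, LinearMap.mem_ker, LinearMap.sub_apply]
    rw [dot_lineVec Pl hm hℓ, sum_lineVec Pl hℓ, sub_self]
  have := hle hx
  rw [LinearMap.mem_ker, LinearMap.sub_apply, sub_eq_zero] at this
  exact this

lemma mem_ann {x : Pl.P → ZMod 3} (hx : x ∈ lineCode Pl ⊓ LinearMap.ker (sumMap Pl)) :
    dotL Pl x ∈ (lineCode Pl).dualAnnihilator := by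
  rw [Submodule.mem_dualAnnihilator]
  intro y hy
  have hle : lineCode Pl ≤ LinearMap.ker (dotL Pl x) := by
    apply Submodule.span_le.2
    rintro y ⟨ℓ, hℓ, rfl⟩
    simp only [SetLike.mem_coe, LinearMap.mem_ker]
    rw [← dotL_comm, code_dot_eq_sum Pl hℓ hx.1]
    exact hx.2
  exact hle hy

lemma L_nonempty : ∃ ℓ, ℓ ∈ Pl.L := by
  have h := Pl.cardL
  have : Pl.L.Nonempty := Finset.card_pos.mp (by rw [h]; norm_num)
  exact this

lemma finrank_V : finrank (ZMod 3) (Pl.P → ZMod 3) = 13 := by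
  rw [Module.finrank_fintype_fun_eq_card, Pl.cardP]
  norm_num

lemma finrank_code_eq : finrank (ZMod 3) ↥(lineCode Pl)
    = 1 + finrank (ZMod 3) ↥(lineCode Pl ⊓ LinearMap.ker (sumMap Pl)) := by
  classical
  set C := lineCode Pl with hC
  set s := (sumMap Pl).domRestrict C with hs
  have hsurj : Function.Surjective s := by
    intro z
    obtain ⟨ℓ, hℓ⟩ := L_nonempty Pl
    have hmem : lineVec Pl ℓ ∈ C := Submodule.subset_span ⟨ℓ, hℓ, rfl⟩
    refine ⟨z • ⟨lineVec Pl ℓ, hmem⟩, ?_⟩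
    have h1 : s ⟨lineVec Pl ℓ, hmem⟩ = 1 := sum_lineVec Pl hℓ
    rw [map_smul, h1]
    simp
  have hrn := LinearMap.finrank_range_add_finrank_ker s
  have hrange : LinearMap.range s = ⊤ := LinearMap.range_eq_top.2 hsurj
  have h1 : finrank (ZMod 3) ↥(LinearMap.range s) = 1 := by
    rw [hrange]
    rw [finrank_top]
    exact Module.finrank_self (ZMod 3)
  have hker : LinearMap.ker s = Submodule.comap C.subtype (C ⊓ LinearMap.ker (sumMap Pl)) := by
    rw [hs, LinearMap.ker_domRestrict, Submodule.comap_inf]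
    have : Submodule.comap C.subtype C = ⊤ := by
      ext x
      simp only [Submodule.mem_comap, Submodule.mem_top, iff_true, Submodule.coe_subtype]
      exact x.2
    rw [this, top_inf_eq]
  have h2 : finrank (ZMod 3) ↥(LinearMap.ker s)
      = finrank (ZMod 3) ↥(C ⊓ LinearMap.ker (sumMap Pl)) := by
    rw [hker]
    exact LinearEquiv.finrank_eq (Submodule.comapSubtypeEquivOfLe inf_le_left)
  rw [h1, h2] at hrn
  exact hrn.symm

lemma code_le_seven : finrank (ZMod 3) ↥(lineCode Pl)
      + finrank (ZMod 3) ↥(lineCode Pl ⊓ LinearMap.ker (sumMap Pl)) ≤ 13 := by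
  classical
  set C := lineCode Pl with hC
  set C' := lineCode Pl ⊓ LinearMap.ker (sumMap Pl) with hC'
  have hφ : ∀ x : ↥C', dotL Pl (x : Pl.P → ZMod 3) ∈ C.dualAnnihilator :=
    fun x => mem_ann Pl x.2
  set Φ : ↥C' →ₗ[ZMod 3] ↥C.dualAnnihilator :=
    LinearMap.codRestrict C.dualAnnihilator ((dotL Pl).comp C'.subtype) hφ with hΦ
  have hinj : Function.Injective Φ := by
    intro x y hxy
    have : dotL Pl (x : Pl.P → ZMod 3) = dotL Pl (y : Pl.P → ZMod 3) := by
      have := congrArg Subtype.val hxy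
      simpa [hΦ, LinearMap.codRestrict] using this
    exact Subtype.ext (dotL_inj Pl this)
  have hle : finrank (ZMod 3) ↥C' ≤ finrank (ZMod 3) ↥C.dualAnnihilator :=
    LinearMap.finrank_le_finrank_of_injective (f := Φ) hinj
  have hsum : finrank (ZMod 3) ↥C.dualAnnihilator + finrank (ZMod 3) ↥C = 13 := by
    have e1 : finrank (ZMod 3) ((Pl.P → ZMod 3) ⧸ C) = finrank (ZMod 3) C.dualAnnihilator :=
      LinearEquiv.finrank_eq (Subspace.quotEquivAnnihilator C)
    have e2 := Submodule.finrank_quotient_add_finrank C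
    rw [finrank_V Pl] at e2
    omega
  omega

lemma seven_le : 7 ≤ finrank (ZMod 3) ↥(lineCode Pl) := by
  classical
  -- a point p
  have hcard : Fintype.card Pl.P = 13 := by rw [Pl.cardP]; norm_num
  have hne : Nonempty Pl.P := Fintype.card_pos_iff.mp (by omega)
  obtain ⟨p⟩ := hne
  -- the four lines through p
  set T := Pl.L.filter (fun ℓ => p ∈ ℓ) with hTdef
  have hT : T.card = 4 := Pl.point_lines p
  obtain ⟨ℓ1, hℓ1T⟩ := Finset.card_pos.mp (by rw [hT]; norm_num : 0 < T.card)
  have hℓ1L : ℓ1 ∈ Pl.L := (Finset.mem_filter.mp hℓ1T).1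
  have hpℓ1 : p ∈ ℓ1 := (Finset.mem_filter.mp hℓ1T).2
  -- a second point q on ℓ1
  have hcℓ1 : ℓ1.card = 4 := Pl.line_card ℓ1 hℓ1L
  obtain ⟨q, hq⟩ := Finset.card_pos.mp
    (by rw [Finset.card_erase_of_mem hpℓ1, hcℓ1]; norm_num : 0 < (ℓ1.erase p).card)
  have hqp : q ≠ p := Finset.ne_of_mem_erase hq
  have hqℓ1 : q ∈ ℓ1 := Finset.mem_of_mem_erase hq
  -- two lines m1 ≠ m2 through q, distinct from ℓ1
  have hTq : (Pl.L.filter (fun ℓ => q ∈ ℓ)).card = 4 := Pl.point_lines q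
  have hℓ1Tq : ℓ1 ∈ Pl.L.filter (fun ℓ => q ∈ ℓ) := Finset.mem_filter.2 ⟨hℓ1L, hqℓ1⟩
  obtain ⟨m1, hm1S⟩ := Finset.card_pos.mp
    (by rw [Finset.card_erase_of_mem hℓ1Tq, hTq] ;norm_num :
      0 < ((Pl.L.filter (fun ℓ => q ∈ ℓ)).erase ℓ1).card)
  have hm1ℓ1 : m1 ≠ ℓ1 := Finset.ne_of_mem_erase hm1S
  have hm1L : m1 ∈ Pl.L := (Finset.mem_filter.mp (Finset.mem_of_mem_erase hm1S)).1
  have hqm1 : q ∈ m1 := (Finset.mem_filter.mp (Finset.mem_of_mem_erase hm1S)).2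
  obtain ⟨m2, hm2S⟩ := Finset.card_pos.mp
    (by rw [Finset.card_erase_of_mem hm1S, Finset.card_erase_of_mem hℓ1Tq, hTq]; norm_num :
      0 < (((Pl.L.filter (fun ℓ => q ∈ ℓ)).erase ℓ1).erase m1).card)
  have hm2m1 : m2 ≠ m1 := Finset.ne_of_mem_erase hm2S
  have hm2ℓ1 : m2 ≠ ℓ1 := Finset.ne_of_mem_erase (Finset.mem_of_mem_erase hm2S)
  have hm2L : m2 ∈ Pl.L :=
    (Finset.mem_filter.mp (Finset.mem_of_mem_erase (Finset.mem_of_mem_erase hm2S))).1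
  have hqm2 : q ∈ m2 :=
    (Finset.mem_filter.mp (Finset.mem_of_mem_erase (Finset.mem_of_mem_erase hm2S))).2
  have hpm1 : p ∉ m1 := fun hp => hm1ℓ1 (eq_line Pl hqp hm1L hℓ1L hqm1 hp hqℓ1 hpℓ1)
  have hpm2 : p ∉ m2 := fun hp => hm2ℓ1 (eq_line Pl hqp hm2L hℓ1L hqm2 hp hqℓ1 hpℓ1)
  -- a line g through neither p nor q
  have hg : ∃ g ∈ Pl.L, p ∉ g ∧ q ∉ g := by
    by_contra hcon
    push_neg at hcon
    have hsub : Pl.L ⊆ T ∪ Pl.L.filter (fun ℓ => q ∈ ℓ) := by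
      intro x hxL
      by_cases hp : p ∈ x
      · exact Finset.mem_union_left _ (Finset.mem_filter.2 ⟨hxL, hp⟩)
      · exact Finset.mem_union_right _ (Finset.mem_filter.2 ⟨hxL, hcon x hxL hp⟩)
    have h1 := Finset.card_le_card hsub
    have h2 := Finset.card_union_le T (Pl.L.filter (fun ℓ => q ∈ ℓ))
    have h3 := Pl.cardL
    omega
  obtain ⟨g, hgL, hpg, hqg⟩ := hg
  have hgℓ1 : g ≠ ℓ1 := fun h => hpg (h ▸ hpℓ1)
  have hgm1 : g ≠ m1 := fun h => hqg (h ▸ hqm1)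
  have hgm2 : g ≠ m2 := fun h => hqg (h ▸ hqm2)
  -- y1 = g ∩ m1
  obtain ⟨y1, hy1⟩ := Finset.card_eq_one.mp (Pl.lines_meet g hgL m1 hm1L hgm1)
  have hy1gm : y1 ∈ g ∩ m1 := by rw [hy1]; exact Finset.mem_singleton_self y1
  have hy1g : y1 ∈ g := (Finset.mem_inter.mp hy1gm).1
  have hy1m1 : y1 ∈ m1 := (Finset.mem_inter.mp hy1gm).2
  have hy1p : y1 ≠ p := fun h => hpg (h ▸ hy1g)
  have hy1q : y1 ≠ q := fun h => hqg (h ▸ hy1g)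
  -- the line l1 through p and y1
  obtain ⟨l1, ⟨hl1L, hpl1, hy1l1⟩, -⟩ := Pl.unique_line p y1 (Ne.symm hy1p)
  have hl1ℓ1 : l1 ≠ ℓ1 := fun h =>
    hy1q (meet_unique_s10 Pl hℓ1L hm1L (Ne.symm hm1ℓ1) (h ▸ hy1l1) hy1m1 hqℓ1 hqm1)
  -- y2 = g ∩ m2 and line l2 through p and y2
  obtain ⟨y2, hy2⟩ := Finset.card_eq_one.mp (Pl.lines_meet g hgL m2 hm2L hgm2)
  have hy2gm : y2 ∈ g ∩ m2 := by rw [hy2]; exact Finset.mem_singleton_self y2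
  have hy2g : y2 ∈ g := (Finset.mem_inter.mp hy2gm).1
  have hy2m2 : y2 ∈ m2 := (Finset.mem_inter.mp hy2gm).2
  have hy2p : y2 ≠ p := fun h => hpg (h ▸ hy2g)
  have hy2q : y2 ≠ q := fun h => hqg (h ▸ hy2g)
  obtain ⟨l2, ⟨hl2L, hpl2, hy2l2⟩, -⟩ := Pl.unique_line p y2 (Ne.symm hy2p)
  have hl2ℓ1 : l2 ≠ ℓ1 := fun h =>
    hy2q (meet_unique_s10 Pl hℓ1L hm2L (Ne.symm hm2ℓ1) (h ▸ hy2l2) hy2m2 hqℓ1 hqm2)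
  have hgl1 : g ≠ l1 := fun h => hpg (h ▸ hpl1)
  have hgl2 : g ≠ l2 := fun h => hpg (h ▸ hpl2)
  have hy12 : y1 ≠ y2 := fun h =>
    hy1q (meet_unique_s10 Pl hm1L hm2L (Ne.symm hm2m1) hy1m1 (h ▸ hy2m2) hqm1 hqm2)
  have hl1l2 : l1 ≠ l2 := fun h =>
    hy12 (meet_unique_s10 Pl hgL hl1L hgl1 hy1g hy1l1 hy2g (h ▸ hy2l2))
  -- the fourth line μ through p
  have hl1T : l1 ∈ T := Finset.mem_filter.2 ⟨hl1L, hpl1⟩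
  have hl2T : l2 ∈ T := Finset.mem_filter.2 ⟨hl2L, hpl2⟩
  have hl2e : l2 ∈ (T.erase ℓ1).erase l1 :=
    Finset.mem_erase.2 ⟨Ne.symm hl1l2, Finset.mem_erase.2 ⟨hl2ℓ1, hl2T⟩⟩
  have hl1e : l1 ∈ T.erase ℓ1 := Finset.mem_erase.2 ⟨hl1ℓ1, hl1T⟩
  obtain ⟨μ, hμ⟩ := Finset.card_pos.mp
    (by rw [Finset.card_erase_of_mem hl2e, Finset.card_erase_of_mem hl1e,
        Finset.card_erase_of_mem hℓ1T, hT]; norm_num :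
      0 < (((T.erase ℓ1).erase l1).erase l2).card)
  have hμl2 : μ ≠ l2 := Finset.ne_of_mem_erase hμ
  have hμl1 : μ ≠ l1 := Finset.ne_of_mem_erase (Finset.mem_of_mem_erase hμ)
  have hμℓ1 : μ ≠ ℓ1 :=
    Finset.ne_of_mem_erase (Finset.mem_of_mem_erase (Finset.mem_of_mem_erase hμ))
  have hμT : μ ∈ T := Finset.mem_of_mem_erase
    (Finset.mem_of_mem_erase (Finset.mem_of_mem_erase hμ))
  have hμL : μ ∈ Pl.L := (Finset.mem_filter.mp hμT).1
  have hpμ : p ∈ μ := (Finset.mem_filter.mp hμT).2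
  -- q not on l1 l2 μ
  have hql1 : q ∉ l1 := fun h => hl1ℓ1 (eq_line Pl hqp hl1L hℓ1L h hpl1 hqℓ1 hpℓ1)
  have hql2 : q ∉ l2 := fun h => hl2ℓ1 (eq_line Pl hqp hl2L hℓ1L h hpl2 hqℓ1 hpℓ1)
  have hqμ : q ∉ μ := fun h => hμℓ1 (eq_line Pl hqp hμL hℓ1L h hpμ hqℓ1 hpℓ1)
  -- line distinctness via p
  have hμm1 : μ ≠ m1 := fun h => hpm1 (h ▸ hpμ)
  have hμm2 : μ ≠ m2 := fun h => hpm2 (h ▸ hpμ)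
  have hμg : μ ≠ g := fun h => hpg (h ▸ hpμ)
  have hl1m1 : l1 ≠ m1 := fun h => hpm1 (h ▸ hpl1)
  have hl1m2 : l1 ≠ m2 := fun h => hpm2 (h ▸ hpl1)
  have hl2m1 : l2 ≠ m1 := fun h => hpm1 (h ▸ hpl2)
  have hl2m2 : l2 ≠ m2 := fun h => hpm2 (h ▸ hpl2)
  -- y1 memberships
  have hy1ℓ1 : y1 ∉ ℓ1 := fun h =>
    hy1q (meet_unique_s10 Pl hℓ1L hm1L (Ne.symm hm1ℓ1) h hy1m1 hqℓ1 hqm1)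
  have hy1l2 : y1 ∉ l2 := fun h =>
    hy1p (meet_unique_s10 Pl hl1L hl2L hl1l2 hy1l1 h hpl1 hpl2)
  have hy1μ : y1 ∉ μ := fun h =>
    hy1p (meet_unique_s10 Pl hl1L hμL (Ne.symm hμl1) hy1l1 h hpl1 hpμ)
  have hy1m2 : y1 ∉ m2 := fun h =>
    hy1q (meet_unique_s10 Pl hm1L hm2L (Ne.symm hm2m1) hy1m1 h hqm1 hqm2)
  -- y2 memberships
  have hy2ℓ1 : y2 ∉ ℓ1 := fun h =>
    hy2q (meet_unique_s10 Pl hℓ1L hm2L (Ne.symm hm2ℓ1) h hy2m2 hqℓ1 hqm2)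
  have hy2l1 : y2 ∉ l1 := fun h =>
    hy2p (meet_unique_s10 Pl hl1L hl2L hl1l2 h hy2l2 hpl1 hpl2)
  have hy2μ : y2 ∉ μ := fun h =>
    hy2p (meet_unique_s10 Pl hl2L hμL (Ne.symm hμl2) hy2l2 h hpl2 hpμ)
  have hy2m1 : y2 ∉ m1 := fun h =>
    hy2q (meet_unique_s10 Pl hm1L hm2L (Ne.symm hm2m1) h hy2m2 hqm1 hqm2)
  -- grid point x12 = m1 ∩ l2
  obtain ⟨x12, hx12⟩ := Finset.card_eq_one.mp
    (Pl.lines_meet m1 hm1L l2 hl2L (Ne.symm hl2m1))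
  have hx12i : x12 ∈ m1 ∩ l2 := by rw [hx12]; exact Finset.mem_singleton_self x12
  have hx12m1 : x12 ∈ m1 := (Finset.mem_inter.mp hx12i).1
  have hx12l2 : x12 ∈ l2 := (Finset.mem_inter.mp hx12i).2
  have hx12ℓ1 : x12 ∉ ℓ1 := fun h =>
    hql2 ((meet_unique_s10 Pl hℓ1L hm1L (Ne.symm hm1ℓ1) h hx12m1 hqℓ1 hqm1) ▸ hx12l2)
  have hx12l1 : x12 ∉ l1 := fun h =>
    hpm1 ((meet_unique_s10 Pl hl1L hl2L hl1l2 h hx12l2 hpl1 hpl2) ▸ hx12m1)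
  have hx12μ : x12 ∉ μ := fun h =>
    hpm1 ((meet_unique_s10 Pl hμL hl2L hμl2 h hx12l2 hpμ hpl2) ▸ hx12m1)
  have hx12m2 : x12 ∉ m2 := fun h =>
    hql2 ((meet_unique_s10 Pl hm1L hm2L (Ne.symm hm2m1) hx12m1 h hqm1 hqm2) ▸ hx12l2)
  have hx12g : x12 ∉ g := fun h =>
    hy1p (meet_unique_s10 Pl hl1L hl2L hl1l2 hy1l1
      ((meet_unique_s10 Pl hgL hm1L hgm1 h hx12m1 hy1g hy1m1) ▸ hx12l2) hpl1 hpl2)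
  -- grid point x1m = m1 ∩ μ
  obtain ⟨x1m, hx1m⟩ := Finset.card_eq_one.mp
    (Pl.lines_meet m1 hm1L μ hμL (Ne.symm hμm1))
  have hx1mi : x1m ∈ m1 ∩ μ := by rw [hx1m]; exact Finset.mem_singleton_self x1m
  have hx1mm1 : x1m ∈ m1 := (Finset.mem_inter.mp hx1mi).1
  have hx1mμ : x1m ∈ μ := (Finset.mem_inter.mp hx1mi).2
  have hx1mℓ1 : x1m ∉ ℓ1 := fun h =>
    hqμ ((meet_unique_s10 Pl hℓ1L hm1L (Ne.symm hm1ℓ1) h hx1mm1 hqℓ1 hqm1) ▸ hx1mμ)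
  have hx1ml1 : x1m ∉ l1 := fun h =>
    hpm1 ((meet_unique_s10 Pl hl1L hμL (Ne.symm hμl1) h hx1mμ hpl1 hpμ) ▸ hx1mm1)
  have hx1ml2 : x1m ∉ l2 := fun h =>
    hpm1 ((meet_unique_s10 Pl hl2L hμL (Ne.symm hμl2) h hx1mμ hpl2 hpμ) ▸ hx1mm1)
  have hx1mm2 : x1m ∉ m2 := fun h =>
    hqμ ((meet_unique_s10 Pl hm1L hm2L (Ne.symm hm2m1) hx1mm1 h hqm1 hqm2) ▸ hx1mμ)
  have hx1mg : x1m ∉ g := fun h =>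
    hy1p (meet_unique_s10 Pl hl1L hμL (Ne.symm hμl1) hy1l1
      ((meet_unique_s10 Pl hgL hm1L hgm1 h hx1mm1 hy1g hy1m1) ▸ hx1mμ) hpl1 hpμ)
  -- grid point x21 = m2 ∩ l1
  obtain ⟨x21, hx21⟩ := Finset.card_eq_one.mp
    (Pl.lines_meet m2 hm2L l1 hl1L (Ne.symm hl1m2))
  have hx21i : x21 ∈ m2 ∩ l1 := by rw [hx21]; exact Finset.mem_singleton_self x21
  have hx21m2 : x21 ∈ m2 := (Finset.mem_inter.mp hx21i).1
  have hx21l1 : x21 ∈ l1 := (Finset.mem_inter.mp hx21i).2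
  have hx21ℓ1 : x21 ∉ ℓ1 := fun h =>
    hql1 ((meet_unique_s10 Pl hℓ1L hm2L (Ne.symm hm2ℓ1) h hx21m2 hqℓ1 hqm2) ▸ hx21l1)
  have hx21l2 : x21 ∉ l2 := fun h =>
    hpm2 ((meet_unique_s10 Pl hl1L hl2L hl1l2 hx21l1 h hpl1 hpl2) ▸ hx21m2)
  have hx21μ : x21 ∉ μ := fun h =>
    hpm2 ((meet_unique_s10 Pl hμL hl1L hμl1 h hx21l1 hpμ hpl1) ▸ hx21m2)
  have hx21m1 : x21 ∉ m1 := fun h =>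
    hql1 ((meet_unique_s10 Pl hm1L hm2L (Ne.symm hm2m1) h hx21m2 hqm1 hqm2) ▸ hx21l1)
  have hx21g : x21 ∉ g := fun h =>
    hy2p (meet_unique_s10 Pl hl1L hl2L hl1l2
      ((meet_unique_s10 Pl hgL hm2L hgm2 h hx21m2 hy2g hy2m2) ▸ hx21l1) hy2l2 hpl1 hpl2)
  -- grid point x2m = m2 ∩ μ
  obtain ⟨x2m, hx2m⟩ := Finset.card_eq_one.mp
    (Pl.lines_meet m2 hm2L μ hμL (Ne.symm hμm2))
  have hx2mi : x2m ∈ m2 ∩ μ := by rw [hx2m]; exact Finset.mem_singleton_self x2m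
  have hx2mm2 : x2m ∈ m2 := (Finset.mem_inter.mp hx2mi).1
  have hx2mμ : x2m ∈ μ := (Finset.mem_inter.mp hx2mi).2
  have hx2mℓ1 : x2m ∉ ℓ1 := fun h =>
    hqμ ((meet_unique_s10 Pl hℓ1L hm2L (Ne.symm hm2ℓ1) h hx2mm2 hqℓ1 hqm2) ▸ hx2mμ)
  have hx2ml1 : x2m ∉ l1 := fun h =>
    hpm2 ((meet_unique_s10 Pl hl1L hμL (Ne.symm hμl1) h hx2mμ hpl1 hpμ) ▸ hx2mm2)
  have hx2ml2 : x2m ∉ l2 := fun h =>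
    hpm2 ((meet_unique_s10 Pl hl2L hμL (Ne.symm hμl2) h hx2mμ hpl2 hpμ) ▸ hx2mm2)
  have hx2mm1 : x2m ∉ m1 := fun h =>
    hqμ ((meet_unique_s10 Pl hm1L hm2L (Ne.symm hm2m1) h hx2mm2 hqm1 hqm2) ▸ hx2mμ)
  have hx2mg : x2m ∉ g := fun h =>
    hy2p (meet_unique_s10 Pl hl2L hμL (Ne.symm hμl2) hy2l2
      ((meet_unique_s10 Pl hgL hm2L hgm2 h hx2mm2 hy2g hy2m2) ▸ hx2mμ) hpl2 hpμ)
  -- the point r on ℓ1 off everything else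
  have hr2 : ((ℓ1.erase p).erase q).card = 2 := by
    rw [Finset.card_erase_of_mem hq, Finset.card_erase_of_mem hpℓ1, hcℓ1]
  have hrsub : ((ℓ1.erase p).erase q) ∩ g ⊆ ℓ1 ∩ g :=
    Finset.inter_subset_inter (fun x hx =>
      Finset.mem_of_mem_erase (Finset.mem_of_mem_erase hx)) (Finset.Subset.refl g)
  have hcapg : (ℓ1 ∩ g).card = 1 := Pl.lines_meet ℓ1 hℓ1L g hgL (Ne.symm hgℓ1)
  have hrex : (((ℓ1.erase p).erase q) \ g).Nonempty := by
    apply Finset.card_pos.mp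
    have h1 := Finset.card_sdiff_add_card_inter ((ℓ1.erase p).erase q) g
    have h2 := Finset.card_le_card hrsub
    omega
  obtain ⟨r, hr⟩ := hrex
  have hrg : r ∉ g := (Finset.mem_sdiff.mp hr).2
  have hrq : r ≠ q := Finset.ne_of_mem_erase (Finset.mem_sdiff.mp hr).1
  have hrp : r ≠ p := Finset.ne_of_mem_erase (Finset.mem_of_mem_erase (Finset.mem_sdiff.mp hr).1)
  have hrℓ1 : r ∈ ℓ1 := Finset.mem_of_mem_erase (Finset.mem_of_mem_erase (Finset.mem_sdiff.mp hr).1)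
  have hrl1 : r ∉ l1 := fun h =>
    hrp (meet_unique_s10 Pl hℓ1L hl1L (Ne.symm hl1ℓ1) hrℓ1 h hpℓ1 hpl1)
  have hrl2 : r ∉ l2 := fun h =>
    hrp (meet_unique_s10 Pl hℓ1L hl2L (Ne.symm hl2ℓ1) hrℓ1 h hpℓ1 hpl2)
  have hrμ : r ∉ μ := fun h =>
    hrp (meet_unique_s10 Pl hℓ1L hμL (Ne.symm hμℓ1) hrℓ1 h hpℓ1 hpμ)
  have hrm1 : r ∉ m1 := fun h =>
    hrq (meet_unique_s10 Pl hℓ1L hm1L (Ne.symm hm1ℓ1) hrℓ1 h hqℓ1 hqm1)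
  have hrm2 : r ∉ m2 := fun h =>
    hrq (meet_unique_s10 Pl hℓ1L hm2L (Ne.symm hm2ℓ1) hrℓ1 h hqℓ1 hqm2)
  -- the seven line vectors
  set v : Fin 7 → (Pl.P → ZMod 3) :=
    ![lineVec Pl ℓ1, lineVec Pl l1, lineVec Pl l2, lineVec Pl μ,
      lineVec Pl m1, lineVec Pl m2, lineVec Pl g] with hv
  have hli : LinearIndependent (ZMod 3) v := by
    rw [Fintype.linearIndependent_iff]
    intro c hc
    have ev : ∀ z : Pl.P,
        c 0 * lineVec Pl ℓ1 z + c 1 * lineVec Pl l1 z + c 2 * lineVec Pl l2 z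
        + c 3 * lineVec Pl μ z + c 4 * lineVec Pl m1 z + c 5 * lineVec Pl m2 z
        + c 6 * lineVec Pl g z = 0 := by
      intro z
      have h0 := congrFun hc z
      simp only [hv, Fin.sum_univ_succ, Fin.sum_univ_zero, Matrix.cons_val_zero,
        Matrix.cons_val_succ, Finset.sum_apply, Pi.smul_apply, smul_eq_mul, Pi.zero_apply,
        add_zero] at h0
      simp only [show (Fin.succ (0:Fin 6)) = (1:Fin 7) from rfl,
        show ((Fin.succ (0:Fin 5)).succ) = (2:Fin 7) from rfl,
        show (((Fin.succ (0:Fin 4)).succ).succ) = (3:Fin 7) from rfl,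
        show ((((Fin.succ (0:Fin 3)).succ).succ).succ) = (4:Fin 7) from rfl,
        show (((((Fin.succ (0:Fin 2)).succ).succ).succ).succ) = (5:Fin 7) from rfl,
        show ((((((Fin.succ (0:Fin 1)).succ).succ).succ).succ).succ) = (6:Fin 7) from rfl] at h0
      linear_combination h0
    have e_r := ev r
    simp only [lineVec, if_pos hrℓ1, if_neg hrl1, if_neg hrl2, if_neg hrμ, if_neg hrm1,
      if_neg hrm2, if_neg hrg, mul_one, mul_zero, add_zero, zero_add] at e_r
    have e_q := ev q
    simp only [lineVec, if_pos hqℓ1, if_neg hql1, if_neg hql2, if_neg hqμ, if_pos hqm1,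
      if_pos hqm2, if_neg hqg, mul_one, mul_zero, add_zero, zero_add] at e_q
    have e_y1 := ev y1
    simp only [lineVec, if_neg hy1ℓ1, if_pos hy1l1, if_neg hy1l2, if_neg hy1μ, if_pos hy1m1,
      if_neg hy1m2, if_pos hy1g, mul_one, mul_zero, add_zero, zero_add] at e_y1
    have e_y2 := ev y2
    simp only [lineVec, if_neg hy2ℓ1, if_neg hy2l1, if_pos hy2l2, if_neg hy2μ, if_neg hy2m1,
      if_pos hy2m2, if_pos hy2g, mul_one, mul_zero, add_zero, zero_add] at e_y2
    have e12 := ev x12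
    simp only [lineVec, if_neg hx12ℓ1, if_neg hx12l1, if_pos hx12l2, if_neg hx12μ,
      if_pos hx12m1, if_neg hx12m2, if_neg hx12g, mul_one, mul_zero, add_zero, zero_add] at e12
    have e1m := ev x1m
    simp only [lineVec, if_neg hx1mℓ1, if_neg hx1ml1, if_neg hx1ml2, if_pos hx1mμ,
      if_pos hx1mm1, if_neg hx1mm2, if_neg hx1mg, mul_one, mul_zero, add_zero, zero_add] at e1m
    have e21 := ev x21
    simp only [lineVec, if_neg hx21ℓ1, if_pos hx21l1, if_neg hx21l2, if_neg hx21μ,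
      if_neg hx21m1, if_pos hx21m2, if_neg hx21g, mul_one, mul_zero, add_zero, zero_add] at e21
    have e2m := ev x2m
    simp only [lineVec, if_neg hx2mℓ1, if_neg hx2ml1, if_neg hx2ml2, if_pos hx2mμ,
      if_neg hx2mm1, if_pos hx2mm2, if_neg hx2mg, mul_one, mul_zero, add_zero, zero_add] at e2m
    have h45 : c 4 + c 5 = 0 := by linear_combination e_q - e_r
    have h45' : c 4 - c 5 = 0 := by linear_combination e1m - e2m
    have h4 : c 4 = 0 := by
      have h2 : (2 : ZMod 3) * c 4 = 0 := by linear_combination h45 + h45'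
      rcases mul_eq_zero.mp h2 with h | h
      · exact absurd h (by decide)
      · exact h
    have h5 : c 5 = 0 := by linear_combination h45 - h4
    have h1 : c 1 = 0 := by linear_combination e21 - h5
    have h2 : c 2 = 0 := by linear_combination e12 - h4
    have h3 : c 3 = 0 := by linear_combination e1m - h4
    have h6 : c 6 = 0 := by linear_combination e_y1 - h1 - h4
    intro i
    fin_cases i
    · exact e_r
    · exact h1
    · exact h2
    · exact h3
    · exact h4
    · exact h5
    · exact h6
  have hsub7 : Set.range v ⊆ ↑(lineCode Pl) := by
    rintro x ⟨i, rfl⟩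
    fin_cases i
    · exact Submodule.subset_span ⟨ℓ1, hℓ1L, rfl⟩
    · exact Submodule.subset_span ⟨l1, hl1L, rfl⟩
    · exact Submodule.subset_span ⟨l2, hl2L, rfl⟩
    · exact Submodule.subset_span ⟨μ, hμL, rfl⟩
    · exact Submodule.subset_span ⟨m1, hm1L, rfl⟩
    · exact Submodule.subset_span ⟨m2, hm2L, rfl⟩
    · exact Submodule.subset_span ⟨g, hgL, rfl⟩
  have hs : finrank (ZMod 3) ↥(Submodule.span (ZMod 3) (Set.range v)) = 7 := by
    rw [finrank_span_eq_card hli]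
    simp
  calc (7:ℕ) = finrank (ZMod 3) ↥(Submodule.span (ZMod 3) (Set.range v)) := hs.symm
    _ ≤ finrank (ZMod 3) ↥(lineCode Pl) :=
      Submodule.finrank_mono (Submodule.span_le.2 hsub7)



theorem dims (Pl : ProjPlane 3) :
    Module.finrank (ZMod 3) ↥(lineCode Pl) = 7 ∧
    Module.finrank (ZMod 3) ↥(lineCode Pl ⊓ LinearMap.ker (sumMap Pl)) = 6 := by
  have h1 := seven_le Pl
  have h2 := code_le_seven Pl
  have h3 := finrank_code_eq Pl
  omega

end PP

/-- `dim C = 7` and `dim C' = 6`. -/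
theorem stmt10 (Pl : ProjPlane 3) :
    Module.finrank (ZMod 3) ↥(lineCode Pl) = 7 ∧
    Module.finrank (ZMod 3) ↥(lineCode Pl ⊓ LinearMap.ker (sumMap Pl)) = 6 :=
  PP.dims Pl
end

section
/- The minimal weight of the line-span code C of the projective plane of order 3 is 4, and the weight-4 codewords of C are exactly ±h_ℓ for lines ℓ; furthermore the minimal weight of the zero-sum subcode C' is 6. -/
namespace Stmt11Aux

variable (Pl : ProjPlane 3)

/-- the support of a codeword -/
def supp (c : Pl.P → ZMod 3) : Finset Pl.P := Finset.univ.filter (fun p => c p ≠ 0)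

lemma wt_def (c : Pl.P → ZMod 3) : wt c = (supp Pl c).card := rfl

lemma mem_supp {c : Pl.P → ZMod 3} {p : Pl.P} : p ∈ supp Pl c ↔ c p ≠ 0 := by
  simp [supp]

lemma thru_card (p : Pl.P) : (Pl.L.filter (fun ℓ => p ∈ ℓ)).card = 4 := Pl.point_lines p

lemma pair_card (p q : Pl.P) (h : q ≠ p) :
    ((Pl.L.filter (fun ℓ => p ∈ ℓ)).filter (fun ℓ => q ∈ ℓ)).card = 1 := by
  obtain ⟨ℓ, ⟨hL, hp, hq⟩, huniq⟩ := Pl.unique_line p q (Ne.symm h)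
  rw [Finset.card_eq_one]
  refine ⟨ℓ, Finset.ext fun m => ?_⟩
  simp only [Finset.mem_filter, Finset.mem_singleton]
  constructor
  · rintro ⟨⟨h1, h2⟩, h3⟩; exact huniq m ⟨h1, h2, h3⟩
  · rintro rfl; exact ⟨⟨hL, hp⟩, hq⟩

lemma partition_count (p : Pl.P) (T : Finset Pl.P) (hp : p ∉ T) :
    ∑ ℓ ∈ Pl.L.filter (fun ℓ => p ∈ ℓ), (ℓ ∩ T).card = T.card := by
  have h1 : ∀ ℓ : Finset Pl.P, (ℓ ∩ T).card = ∑ q ∈ T, if q ∈ ℓ then 1 else 0 := by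
    intro ℓ
    rw [Finset.sum_ite_mem, Finset.inter_comm]
    simp
  simp only [h1]
  rw [Finset.sum_comm]
  rw [Finset.sum_congr rfl (fun q hq => ?_), Finset.sum_const, smul_eq_mul, mul_one]
  rw [Finset.sum_boole]
  have hqp : q ≠ p := by rintro rfl; exact hp hq
  simpa using pair_card Pl p q hqp

lemma sum_eq_card_forall_one {α : Type _} [DecidableEq α] (s : Finset α) (f : α → ℕ)
    (h1 : ∀ i ∈ s, 1 ≤ f i) (h2 : ∑ i ∈ s, f i = s.card) : ∀ i ∈ s, f i = 1 := by
  intro i hi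
  by_contra hne
  have h3 : 2 ≤ f i := by
    have := h1 i hi; omega
  have h4 : (s.erase i).card ≤ ∑ j ∈ s.erase i, f j := by
    calc (s.erase i).card = ∑ _j ∈ s.erase i, 1 := by simp
    _ ≤ ∑ j ∈ s.erase i, f j :=
      Finset.sum_le_sum (fun j hj => h1 j (Finset.mem_of_mem_erase hj))
  have h5 : ∑ j ∈ s.erase i, f j + f i = ∑ j ∈ s, f j := Finset.sum_erase_add s f hi
  have h6 : (s.erase i).card = s.card - 1 := Finset.card_erase_of_mem hi
  have h7 : 1 ≤ s.card := Finset.card_pos.mpr ⟨i, hi⟩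
  omega

lemma sum_lineVec (ℓ m : Finset Pl.P) :
    ∑ p ∈ ℓ, lineVec Pl m p = ((ℓ ∩ m).card : ZMod 3) := by
  unfold lineVec
  rw [Finset.sum_ite_mem]
  simp

lemma total_sum_lineVec (m : Finset Pl.P) (hm : m ∈ Pl.L) :
    ∑ p, lineVec Pl m p = 1 := by
  unfold lineVec
  rw [Finset.sum_ite_mem, Finset.univ_inter, Finset.sum_const, Pl.line_card m hm]
  simp
  decide

lemma line_sum (c : Pl.P → ZMod 3) (hc : c ∈ lineCode Pl) (ℓ : Finset Pl.P)
    (hℓ : ℓ ∈ Pl.L) : ∑ p ∈ ℓ, c p = ∑ p, c p := by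
  induction hc using Submodule.span_induction with
  | mem x h =>
    obtain ⟨m, hm, rfl⟩ := h
    have hm' : m ∈ Pl.L := hm
    rw [sum_lineVec, total_sum_lineVec Pl m hm']
    by_cases hem : ℓ = m
    · subst hem
      rw [Finset.inter_self, Pl.line_card ℓ hℓ]
      decide
    · rw [Pl.lines_meet ℓ hℓ m hm' hem]; norm_num
  | zero => simp
  | add x y hx hy ihx ihy => simp [Finset.sum_add_distrib, ihx, ihy]
  | smul a x hx ih =>
    simp only [Pi.smul_apply, smul_eq_mul, ← Finset.mul_sum, ih]

lemma sum_inter_supp (c : Pl.P → ZMod 3) (ℓ : Finset Pl.P) :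
    ∑ p ∈ ℓ, c p = ∑ p ∈ ℓ ∩ supp Pl c, c p := by
  refine (Finset.sum_subset Finset.inter_subset_left ?_).symm
  intro x hx hns
  by_contra h
  exact hns (Finset.mem_inter.mpr ⟨hx, (mem_supp Pl).mpr h⟩)

/-- if the total sum is nonzero, every line meets the support -/
lemma line_meets_supp (c : Pl.P → ZMod 3) (hc : c ∈ lineCode Pl)
    (hs : ∑ p, c p ≠ 0) (ℓ : Finset Pl.P) (hℓ : ℓ ∈ Pl.L) :
    1 ≤ (ℓ ∩ supp Pl c).card := by
  rw [Nat.one_le_iff_ne_zero, Ne, Finset.card_eq_zero]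
  intro he
  apply hs
  rw [← line_sum Pl c hc ℓ hℓ, sum_inter_supp Pl c ℓ, he, Finset.sum_empty]

/-- if the total sum is zero, every line through a support point meets the rest
of the support -/
lemma line_meets_rest (c : Pl.P → ZMod 3) (hc : c ∈ lineCode Pl)
    (hs : ∑ p, c p = 0) (p : Pl.P) (hp : p ∈ supp Pl c) (ℓ : Finset Pl.P)
    (hℓ : ℓ ∈ Pl.L) (hpℓ : p ∈ ℓ) : 1 ≤ (ℓ ∩ (supp Pl c).erase p).card := by
  rw [Nat.one_le_iff_ne_zero, Ne, Finset.card_eq_zero]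
  intro he
  have h2 : ℓ ∩ supp Pl c = {p} := by
    apply Finset.Subset.antisymm
    · intro x hx
      rcases Finset.mem_inter.mp hx with ⟨hx1, hx2⟩
      by_contra hxp
      have : x ∈ ℓ ∩ (supp Pl c).erase p :=
        Finset.mem_inter.mpr ⟨hx1, Finset.mem_erase.mpr ⟨by simpa using hxp, hx2⟩⟩
      simp [he] at this
    · intro x hx
      rw [Finset.mem_singleton] at hx
      subst hx
      exact Finset.mem_inter.mpr ⟨hpℓ, hp⟩
  have h3 := line_sum Pl c hc ℓ hℓ
  rw [sum_inter_supp Pl c ℓ, h2, Finset.sum_singleton, hs] at h3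
  exact (mem_supp Pl).mp hp h3

/-- lower bound 4 when the total sum is nonzero -/
lemma min4_aux (c : Pl.P → ZMod 3) (hc : c ∈ lineCode Pl) (hs : ∑ p, c p ≠ 0) :
    4 ≤ (supp Pl c).card := by
  by_cases hu : supp Pl c = Finset.univ
  · rw [hu, Finset.card_univ, Pl.cardP]; norm_num
  · obtain ⟨x, hx⟩ : ∃ x, x ∉ supp Pl c := by
      by_contra h
      push_neg at h
      exact hu (Finset.eq_univ_of_forall h)
    have hpc := partition_count Pl x (supp Pl c) hx
    calc (4 : ℕ) = (Pl.L.filter (fun ℓ => x ∈ ℓ)).card := (thru_card Pl x).symm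
    _ = ∑ _ℓ ∈ Pl.L.filter (fun ℓ => x ∈ ℓ), 1 := by simp
    _ ≤ ∑ ℓ ∈ Pl.L.filter (fun ℓ => x ∈ ℓ), (ℓ ∩ supp Pl c).card := by
        refine Finset.sum_le_sum fun ℓ hℓ => ?_
        exact line_meets_supp Pl c hc hs ℓ (Finset.mem_of_mem_filter ℓ hℓ)
    _ = (supp Pl c).card := hpc

/-- in the weight-4, nonzero-sum case, lines through an external point meet the
support exactly once -/
lemma exact_one (c : Pl.P → ZMod 3) (hc : c ∈ lineCode Pl) (hs : ∑ p, c p ≠ 0)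
    (h4 : (supp Pl c).card = 4) (x : Pl.P) (hx : x ∉ supp Pl c)
    (ℓ : Finset Pl.P) (hℓ : ℓ ∈ Pl.L) (hxℓ : x ∈ ℓ) :
    (ℓ ∩ supp Pl c).card = 1 := by
  have hpc := partition_count Pl x (supp Pl c) hx
  refine sum_eq_card_forall_one (Pl.L.filter (fun ℓ => x ∈ ℓ))
    (fun ℓ => (ℓ ∩ supp Pl c).card) (fun m hm => ?_) ?_ ℓ ?_
  · exact line_meets_supp Pl c hc hs m (Finset.mem_of_mem_filter m hm)
  · rw [hpc, thru_card, h4]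
  · exact Finset.mem_filter.mpr ⟨hℓ, hxℓ⟩

/-- classification of weight-4 codewords with nonzero sum -/
lemma classify (c : Pl.P → ZMod 3) (hc : c ∈ lineCode Pl) (hs : ∑ p, c p ≠ 0)
    (h4 : (supp Pl c).card = 4) :
    ∃ ℓ ∈ Pl.L, c = lineVec Pl ℓ ∨ c = -lineVec Pl ℓ := by
  obtain ⟨q, hq, r, hr, hqr⟩ := Finset.one_lt_card.mp (by omega : 1 < (supp Pl c).card)
  obtain ⟨ℓ, ⟨hℓL, hqℓ, hrℓ⟩, -⟩ := Pl.unique_line q r hqr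
  have hsub : ℓ ⊆ supp Pl c := by
    intro x hxℓ
    by_contra hx
    have h1 := exact_one Pl c hc hs h4 x hx ℓ hℓL hxℓ
    have h2 : 1 < (ℓ ∩ supp Pl c).card :=
      Finset.one_lt_card.mpr ⟨q, Finset.mem_inter.mpr ⟨hqℓ, hq⟩,
        r, Finset.mem_inter.mpr ⟨hrℓ, hr⟩, hqr⟩
    omega
  have hSeq : ℓ = supp Pl c := by
    apply Finset.eq_of_subset_of_card_le hsub
    rw [h4, Pl.line_card ℓ hℓL]
  -- every point of ℓ has value s := total sum
  have hval : ∀ p ∈ ℓ, c p = ∑ q, c q := by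
    intro p hpℓ
    -- find a second line through p
    have hcard : 1 < ((Pl.L.filter (fun m => p ∈ m))).card := by
      rw [thru_card]; norm_num
    obtain ⟨m, hmL, hpm, hmℓ⟩ : ∃ m, m ∈ Pl.L ∧ p ∈ m ∧ m ≠ ℓ := by
      obtain ⟨m₁, hm₁, m₂, hm₂, hm12⟩ := Finset.one_lt_card.mp hcard
      rcases Finset.mem_filter.mp hm₁ with ⟨hm₁L, hpm₁⟩
      rcases Finset.mem_filter.mp hm₂ with ⟨hm₂L, hpm₂⟩
      rcases eq_or_ne m₁ ℓ with h | h
      · exact ⟨m₂, hm₂L, hpm₂, by rw [← h]; exact hm12.symm⟩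
      · exact ⟨m₁, hm₁L, hpm₁, h⟩
    have hmeet : m ∩ ℓ = {p} := by
      have h1 := Pl.lines_meet m hmL ℓ hℓL hmℓ
      obtain ⟨a, ha⟩ := Finset.card_eq_one.mp h1
      have hpa : p ∈ ({a} : Finset Pl.P) := ha ▸ Finset.mem_inter.mpr ⟨hpm, hpℓ⟩
      rw [Finset.mem_singleton] at hpa
      rw [ha, hpa]
    have h2 := line_sum Pl c hc m hmL
    rw [sum_inter_supp Pl c m, ← hSeq, hmeet, Finset.sum_singleton] at h2
    exact h2
  have hzero : ∀ p, p ∉ ℓ → c p = 0 := by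
    intro p hp
    by_contra h
    exact hp (hSeq ▸ (mem_supp Pl).mpr h)
  refine ⟨ℓ, hℓL, ?_⟩
  have hs1 : (∑ q, c q) = 1 ∨ (∑ q, c q) = -1 :=
    (by decide : ∀ s : ZMod 3, s ≠ 0 → s = 1 ∨ s = -1) _ hs
  rcases hs1 with h | h
  · left; funext p
    by_cases hp : p ∈ ℓ
    · rw [hval p hp, h]; simp [lineVec, hp]
    · rw [hzero p hp]; simp [lineVec, hp]
  · right; funext p
    by_cases hp : p ∈ ℓ
    · rw [hval p hp, h]; simp [lineVec, hp]
    · rw [hzero p hp]; simp [lineVec, hp]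

/-- lower bound 6 when the total sum is zero -/
lemma min6_aux (c : Pl.P → ZMod 3) (hc : c ∈ lineCode Pl) (hs : ∑ p, c p = 0)
    (hne : c ≠ 0) : 6 ≤ (supp Pl c).card := by
  obtain ⟨p0, hp0⟩ : ∃ p, c p ≠ 0 := by
    by_contra h; push_neg at h; exact hne (funext h)
  have hp0' : p0 ∈ supp Pl c := (mem_supp Pl).mpr hp0
  have key : ∀ p ∈ supp Pl c, 4 ≤ ((supp Pl c).erase p).card ∧
      (((supp Pl c).erase p).card = 4 →
        ∀ ℓ ∈ Pl.L, p ∈ ℓ → (ℓ ∩ (supp Pl c).erase p).card = 1) := by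
    intro p hp
    have hpc := partition_count Pl p ((supp Pl c).erase p) (Finset.notMem_erase p _)
    have hge : ∀ m ∈ Pl.L.filter (fun ℓ => p ∈ ℓ),
        1 ≤ (m ∩ (supp Pl c).erase p).card := by
      intro m hm
      rcases Finset.mem_filter.mp hm with ⟨hmL, hpm⟩
      exact line_meets_rest Pl c hc hs p hp m hmL hpm
    constructor
    · calc (4:ℕ) = (Pl.L.filter (fun ℓ => p ∈ ℓ)).card := (thru_card Pl p).symm
      _ = ∑ _m ∈ Pl.L.filter (fun ℓ => p ∈ ℓ), 1 := by simp
      _ ≤ ∑ m ∈ Pl.L.filter (fun ℓ => p ∈ ℓ), (m ∩ (supp Pl c).erase p).card :=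
          Finset.sum_le_sum hge
      _ = _ := hpc
    · intro h4 ℓ hℓ hpℓ
      exact sum_eq_card_forall_one _ _ hge (by rw [hpc, thru_card, h4]) ℓ
        (Finset.mem_filter.mpr ⟨hℓ, hpℓ⟩)
  have hcard5 : 5 ≤ (supp Pl c).card := by
    have h1 := (key p0 hp0').1
    have h2 := Finset.card_erase_of_mem hp0'
    omega
  rcases Nat.lt_or_ge (supp Pl c).card 6 with h6 | h6
  swap
  · exact h6
  exfalso
  have h5 : (supp Pl c).card = 5 := by omega
  have pairwise : ∀ p ∈ supp Pl c, ∀ q ∈ supp Pl c, q ≠ p → c q = -c p := by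
    intro p hp q hq hqp
    obtain ⟨ℓ, ⟨hℓL, hpℓ, hqℓ⟩, -⟩ := Pl.unique_line p q (Ne.symm hqp)
    have h1 : (ℓ ∩ (supp Pl c).erase p).card = 1 := by
      refine (key p hp).2 ?_ ℓ hℓL hpℓ
      rw [Finset.card_erase_of_mem hp, h5]
    obtain ⟨a, ha⟩ := Finset.card_eq_one.mp h1
    have hq' : q ∈ ({a} : Finset Pl.P) := ha ▸
      Finset.mem_inter.mpr ⟨hqℓ, Finset.mem_erase.mpr ⟨hqp, hq⟩⟩
    rw [Finset.mem_singleton] at hq'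
    subst hq'
    have h2 : ℓ ∩ supp Pl c = {p, q} := by
      apply Finset.Subset.antisymm
      · intro x hx
        rcases Finset.mem_inter.mp hx with ⟨hx1, hx2⟩
        rcases eq_or_ne x p with h | h
        · simp [h]
        · have : x ∈ ℓ ∩ (supp Pl c).erase p :=
            Finset.mem_inter.mpr ⟨hx1, Finset.mem_erase.mpr ⟨h, hx2⟩⟩
          rw [ha, Finset.mem_singleton] at this
          simp [this]
      · intro x hx
        rcases Finset.mem_insert.mp hx with h | h
        · subst h; exact Finset.mem_inter.mpr ⟨hpℓ, hp⟩
        · rw [Finset.mem_singleton] at h; subst h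
          exact Finset.mem_inter.mpr ⟨hqℓ, hq⟩
    have h3 := line_sum Pl c hc ℓ hℓL
    rw [sum_inter_supp Pl c ℓ, h2, Finset.sum_pair (Ne.symm hqp), hs] at h3
    linear_combination h3
  obtain ⟨q, hq⟩ : ∃ q, q ∈ (supp Pl c).erase p0 := by
    apply Finset.Nonempty.exists_mem
    rw [← Finset.card_pos, Finset.card_erase_of_mem hp0', h5]; norm_num
  obtain ⟨r, hr⟩ : ∃ r, r ∈ ((supp Pl c).erase p0).erase q := by
    apply Finset.Nonempty.exists_mem
    rw [← Finset.card_pos, Finset.card_erase_of_mem hq,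
      Finset.card_erase_of_mem hp0', h5]; norm_num
  rcases Finset.mem_erase.mp hq with ⟨hqp0, hqS⟩
  rcases Finset.mem_erase.mp hr with ⟨hrq, hr'⟩
  rcases Finset.mem_erase.mp hr' with ⟨hrp0, hrS⟩
  have e1 := pairwise p0 hp0' q hqS hqp0
  have e2 := pairwise p0 hp0' r hrS hrp0
  have e3 := pairwise q hqS r hrS hrq
  have : c p0 = 0 := by
    have : c p0 = -c p0 := by linear_combination e1 + e2 - e3
    exact (by decide : ∀ x : ZMod 3, x = -x → x = 0) _ this
  exact hp0 this

lemma supp_lineVec (ℓ : Finset Pl.P) : supp Pl (lineVec Pl ℓ) = ℓ := by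
  ext p
  by_cases h : p ∈ ℓ <;> simp [mem_supp, lineVec, h]

lemma supp_neg (c : Pl.P → ZMod 3) : supp Pl (-c) = supp Pl c := by
  ext p; simp [mem_supp]

lemma wt_lineVec (ℓ : Finset Pl.P) (hℓ : ℓ ∈ Pl.L) : wt (lineVec Pl ℓ) = 4 := by
  rw [wt_def, supp_lineVec, Pl.line_card ℓ hℓ]

lemma wt_zero : wt (0 : Pl.P → ZMod 3) = 0 := by simp [wt]

lemma lineVec_mem (ℓ : Finset Pl.P) (hℓ : ℓ ∈ Pl.L) : lineVec Pl ℓ ∈ lineCode Pl :=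
  Submodule.subset_span ⟨ℓ, hℓ, rfl⟩

lemma supp_sub (ℓ m : Finset Pl.P) :
    supp Pl (lineVec Pl ℓ - lineVec Pl m) = (ℓ \ m) ∪ (m \ ℓ) := by
  ext p
  by_cases h1 : p ∈ ℓ <;> by_cases h2 : p ∈ m <;>
    simp [mem_supp, lineVec, h1, h2]

end Stmt11Aux


open Stmt11Aux in
/-- The minimal weight of `C` is 4, with the weight-4 codewords being exactly
`±h_ℓ`; and the minimal weight of the zero-sum subcode `C'` is 6. -/
theorem stmt11 (Pl : ProjPlane 3) :
    (∀ c ∈ lineCode Pl, c ≠ 0 → 4 ≤ wt c) ∧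
    (∃ c ∈ lineCode Pl, c ≠ 0 ∧ wt c = 4) ∧
    (∀ c ∈ lineCode Pl,
      (wt c = 4 ↔ ∃ ℓ ∈ Pl.L, c = lineVec Pl ℓ ∨ c = -lineVec Pl ℓ)) ∧
    (∀ c ∈ lineCode Pl, (∑ p, c p) = 0 → c ≠ 0 → 6 ≤ wt c) ∧
    (∃ c ∈ lineCode Pl, (∑ p, c p) = 0 ∧ c ≠ 0 ∧ wt c = 6) := by
  refine ⟨?_, ?_, ?_, ?_, ?_⟩
  · intro c hc hne
    rw [wt_def]
    by_cases hs : (∑ p, c p) = 0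
    · have := min6_aux Pl c hc hs hne; omega
    · exact min4_aux Pl c hc hs
  · obtain ⟨ℓ, hℓ⟩ : ∃ ℓ, ℓ ∈ Pl.L := by
      have : 0 < Pl.L.card := by rw [Pl.cardL]; norm_num
      exact (Finset.card_pos.mp this).exists_mem
    refine ⟨lineVec Pl ℓ, lineVec_mem Pl ℓ hℓ, ?_, wt_lineVec Pl ℓ hℓ⟩
    intro h
    have h4 := wt_lineVec Pl ℓ hℓ
    rw [h, wt_zero] at h4
    exact absurd h4 (by norm_num)
  · intro c hc
    constructor
    · intro h4
      have hne : c ≠ 0 := by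
        intro h; rw [h, wt_zero] at h4; exact absurd h4 (by norm_num)
      rw [wt_def Pl] at h4
      by_cases hs : (∑ p, c p) = 0
      · have := min6_aux Pl c hc hs hne; omega
      · exact classify Pl c hc hs h4
    · rintro ⟨ℓ, hℓ, rfl | rfl⟩
      · exact wt_lineVec Pl ℓ hℓ
      · rw [wt_def, supp_neg, supp_lineVec, Pl.line_card ℓ hℓ]
  · intro c hc hs hne
    rw [wt_def]
    exact min6_aux Pl c hc hs hne
  · obtain ⟨ℓ, hℓ, m, hm, hlm⟩ :=
      Finset.one_lt_card.mp (by rw [Pl.cardL]; norm_num : 1 < Pl.L.card)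
    have w6 : wt (lineVec Pl ℓ - lineVec Pl m) = 6 := by
      rw [wt_def, supp_sub]
      rw [Finset.card_union_of_disjoint disjoint_sdiff_sdiff]
      have h1 : (ℓ ∩ m).card = 1 := Pl.lines_meet ℓ hℓ m hm hlm
      have h2 : (m ∩ ℓ).card = 1 := by rw [Finset.inter_comm]; exact h1
      have h3 := Finset.card_sdiff_add_card_inter ℓ m
      have h4 := Finset.card_sdiff_add_card_inter m ℓ
      have h5 := Pl.line_card ℓ hℓ
      have h6 := Pl.line_card m hm
      omega
    have hsum : (∑ p, (lineVec Pl ℓ - lineVec Pl m) p) = 0 := by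
      simp only [Pi.sub_apply, Finset.sum_sub_distrib,
        total_sum_lineVec Pl ℓ hℓ, total_sum_lineVec Pl m hm, sub_self]
    refine ⟨lineVec Pl ℓ - lineVec Pl m,
      Submodule.sub_mem _ (lineVec_mem Pl ℓ hℓ) (lineVec_mem Pl m hm), hsum, ?_, w6⟩
    intro h
    rw [h, wt_zero] at w6
    exact absurd w6 (by norm_num)
end

section
/- Let ℓ = {p,q,r,s} be a line of the projective plane of order 3 and let the move [p,q] act F₃-linearly on F₃^P by w'_p = w_q, w'_q = −w_p − w_q, w'_r = −w_s, w'_s = −w_r, and w'_t = w_t for t ∉ ℓ. Then this linear map carries the subcode C_p onto the subcode C_q. -/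
/-- The subcode `C_x = {c ∈ C : c_x = -Σ_t c_t}`, as a set. -/
def subcodeSet (Pl : ProjPlane 3) (x : Pl.P) : Set (Pl.P → ZMod 3) :=
  {c | c ∈ lineCode Pl ∧ c x = -∑ t, c t}

/-- For any codeword, the sum over any line equals the total sum. -/
lemma line_sum_eq_total (Pl : ProjPlane 3) (c : Pl.P → ZMod 3)
    (hc : c ∈ lineCode Pl) (m : Finset Pl.P) (hm : m ∈ Pl.L) :
    ∑ t ∈ m, c t = ∑ t, c t := by
  induction hc using Submodule.span_induction with
  | mem x hx =>
    obtain ⟨ℓ', hℓ', rfl⟩ := hx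
    have hℓ'L : ℓ' ∈ Pl.L := hℓ'
    have hsum : ∀ u : Finset Pl.P, ∑ t ∈ u, lineVec Pl ℓ' t = ((u ∩ ℓ').card : ZMod 3) := by
      intro u
      simp only [lineVec]
      rw [Finset.sum_boole, Finset.filter_mem_eq_inter]
    rw [hsum m, show (∑ t, lineVec Pl ℓ' t) = ∑ t ∈ Finset.univ, lineVec Pl ℓ' t from rfl,
      hsum Finset.univ, Finset.univ_inter]
    by_cases h : m = ℓ'
    · subst h; rw [Finset.inter_self]
    · rw [Pl.lines_meet m hm ℓ' hℓ'L h, Pl.line_card ℓ' hℓ'L]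
      decide
  | zero => simp
  | add x y hx hy ihx ihy =>
    simp only [Pi.add_apply]
    rw [Finset.sum_add_distrib, Finset.sum_add_distrib, ihx, ihy]
  | smul a x hx ih =>
    simp only [Pi.smul_apply, smul_eq_mul, ← Finset.mul_sum, ih]

lemma move_mem (Pl : ProjPlane 3) (p q r s : Pl.P)
    (hpq : p ≠ q) (hpr : p ≠ r) (hps : p ≠ s) (hqr : q ≠ r) (hqs : q ≠ s)
    (hrs : r ≠ s) (hline : ({p, q, r, s} : Finset Pl.P) ∈ Pl.L)
    (w : Pl.P → ZMod 3) (hw : w ∈ subcodeSet Pl p) :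
    (fun t =>
        if t = p then w q
        else if t = q then -w p - w q
        else if t = r then -w s
        else if t = s then -w r
        else w t) ∈ subcodeSet Pl q := by
  obtain ⟨hwC, hwp⟩ := hw
  have h3 : (3 : ZMod 3) = 0 := by decide
  have h1 : w p + w q + w r + w s = ∑ t, w t := by
    have := line_sum_eq_total Pl w hwC _ hline
    rw [show ({p, q, r, s} : Finset Pl.P) = insert p (insert q (insert r {s})) from rfl,
      Finset.sum_insert (by simp [hpq, hpr, hps]),
      Finset.sum_insert (by simp [hqr, hqs]),
      Finset.sum_insert (by simp [hrs]), Finset.sum_singleton] at this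
    linear_combination this
  have key : w p = w q + w r + w s := by
    linear_combination -h1 - hwp + (w p) * h3
  have hmem : ∀ t : Pl.P, t ∈ ({p, q, r, s} : Finset Pl.P) ↔ (t = p ∨ t = q ∨ t = r ∨ t = s) := by
    intro t; simp [Finset.mem_insert]
  have heq : (fun t =>
        if t = p then w q
        else if t = q then -w p - w q
        else if t = r then -w s
        else if t = s then -w r
        else w t) = w + (w q - w p) • lineVec Pl ({p, q, r, s} : Finset Pl.P) := by
    funext t
    simp only [Pi.add_apply, Pi.smul_apply, smul_eq_mul, lineVec, hmem t]
    by_cases h1t : t = p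
    · rw [if_pos h1t, if_pos (Or.inl h1t), h1t]; ring
    · by_cases h2t : t = q
      · rw [if_neg h1t, if_pos h2t, if_pos (Or.inr (Or.inl h2t)), h2t]
        linear_combination -(w q) * h3
      · by_cases h3t : t = r
        · rw [if_neg h1t, if_neg h2t, if_pos h3t,
            if_pos (Or.inr (Or.inr (Or.inl h3t))), h3t]
          linear_combination key
        · by_cases h4t : t = s
          · rw [if_neg h1t, if_neg h2t, if_neg h3t, if_pos h4t,
              if_pos (Or.inr (Or.inr (Or.inr h4t))), h4t]
            linear_combination key
          · rw [if_neg h1t, if_neg h2t, if_neg h3t, if_neg h4t,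
              if_neg (by tauto : ¬(t = p ∨ t = q ∨ t = r ∨ t = s))]
            ring
  have hlv : lineVec Pl ({p, q, r, s} : Finset Pl.P) ∈ lineCode Pl :=
    Submodule.subset_span ⟨_, hline, rfl⟩
  constructor
  · rw [heq]
    exact Submodule.add_mem _ hwC (Submodule.smul_mem _ _ hlv)
  · have hχ : ∑ t, lineVec Pl ({p, q, r, s} : Finset Pl.P) t = 1 := by
      simp only [lineVec]
      rw [Finset.sum_boole, Finset.filter_univ_mem]
      rw [show ({p, q, r, s} : Finset Pl.P).card = 4 from Pl.line_card _ hline]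
      decide
    have hsum2 : (∑ t, (w + (w q - w p) • lineVec Pl ({p, q, r, s} : Finset Pl.P)) t)
        = (∑ t, w t) + (w q - w p) := by
      simp only [Pi.add_apply, Pi.smul_apply, smul_eq_mul]
      rw [Finset.sum_add_distrib, ← Finset.mul_sum, hχ, mul_one]
    rw [heq, hsum2]
    simp only [Pi.add_apply, Pi.smul_apply, smul_eq_mul, lineVec,
      if_pos (show q ∈ ({p, q, r, s} : Finset Pl.P) by simp)]
    linear_combination hwp + (w q - w p) * h3

/-- The move `[p,q]` along the line `ℓ = {p,q,r,s}` acts linearly on `F₃^P`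
and carries the subcode `C_p` onto the subcode `C_q`. -/
theorem stmt13 (Pl : ProjPlane 3) (p q r s : Pl.P)
    (hpq : p ≠ q) (hpr : p ≠ r) (hps : p ≠ s) (hqr : q ≠ r) (hqs : q ≠ s)
    (hrs : r ≠ s) (hline : ({p, q, r, s} : Finset Pl.P) ∈ Pl.L) :
    (fun w : Pl.P → ZMod 3 => fun t =>
        if t = p then w q
        else if t = q then -w p - w q
        else if t = r then -w s
        else if t = s then -w r
        else w t) '' subcodeSet Pl p = subcodeSet Pl q := by
  have hline' : ({q, p, r, s} : Finset Pl.P) ∈ Pl.L := by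
    rwa [Finset.insert_comm]
  ext c
  constructor
  · rintro ⟨w, hw, rfl⟩
    exact move_mem Pl p q r s hpq hpr hps hqr hqs hrs hline w hw
  · intro hc
    refine ⟨fun t =>
        if t = q then c p
        else if t = p then -c q - c p
        else if t = r then -c s
        else if t = s then -c r
        else c t,
      move_mem Pl q p r s hpq.symm hqr hqs hpr hps hrs hline' c hc, ?_⟩
    funext t
    by_cases h1t : t = p
    · simp [h1t, hpq]
    · by_cases h2t : t = q
      · simp [h1t, h2t, hpq, hpq.symm]
      · by_cases h3t : t = r
        · simp [h1t, h2t, h3t, hqs.symm, hps.symm, hrs.symm, hqr.symm, hpr.symm, hrs]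
        · by_cases h4t : t = s
          · simp [h1t, h2t, h3t, h4t, hqr.symm, hpr.symm, hrs, hqs.symm, hps.symm, hrs.symm]
          · simp [h1t, h2t, h3t, h4t]
end

section
/- For any incident point-line pair (p, ℓ) of the projective plane of order 3, the 12×12 matrix H_{p,ℓ} — obtained from the ±1 incidence matrix E by deleting row p and column ℓ and negating entry e_{ij} exactly when i ∈ ℓ and j passes through p — is a Hadamard matrix: any two distinct rows are orthogonal. -/
/-- The ±1 incidence matrix entry: `-1` if the point lies on the line, `+1`
otherwise. -/
def pmEntry (Pl : ProjPlane 3) (i : Pl.P) (j : Finset Pl.P) : ℤ :=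
  if i ∈ j then -1 else 1

/-- The entry of the 12×12 matrix `H_{p,ℓ}`: negate `e_{ij}` exactly when
`i ∈ ℓ` and `p ∈ j`. -/
def hadEntry (Pl : ProjPlane 3) (p : Pl.P) (ℓ : Finset Pl.P)
    (i : Pl.P) (j : Finset Pl.P) : ℤ :=
  if i ∈ ℓ ∧ p ∈ j then -pmEntry Pl i j else pmEntry Pl i j

/-!
Write `e_i(m) = pmEntry i m`. Expanding `e_a e_b = (1 - 2[a ∈ m])(1 - 2[b ∈ m])` and summing over
the 13 lines of the plane gives `13 - 2·4 - 2·4 + 4·1 = 1` for distinct points `a, b`; likewise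
the triple product `e_p e_a e_b` sums to `13 - 2·12 + 4·3 = 1` for three non-collinear points.
Since `H_{p,ℓ}` negates row `i ∈ ℓ` exactly on the lines through `p`, its entries are
`e_p(m) e_i(m)` for `i ∈ ℓ` and `e_i(m)` otherwise. So the scalar product of rows `r, s` is a
sum of `e_r e_s` (if `r, s` are both on `ℓ` or both off it) or of `e_p e_r e_s` (otherwise, and
then `p, r, s` are not collinear) over all lines but `ℓ`; in either case it is `1` minus the term
at `ℓ`, which is `1`.
-/

open Finset

namespace ProjPlane

variable {n : ℕ} (Pl : ProjPlane n)

theorem eq_of_mem_of_mem {ℓ m : Finset Pl.P} (hℓ : ℓ ∈ Pl.L) (hm : m ∈ Pl.L) {a b : Pl.P}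
    (hab : a ≠ b) (haℓ : a ∈ ℓ) (hbℓ : b ∈ ℓ) (ham : a ∈ m) (hbm : b ∈ m) : m = ℓ :=
  (Pl.unique_line a b hab).unique ⟨hm, ham, hbm⟩ ⟨hℓ, haℓ, hbℓ⟩

theorem card_filter_mem_and_mem {a b : Pl.P} (hab : a ≠ b) :
    #{m ∈ Pl.L | a ∈ m ∧ b ∈ m} = 1 := by
  obtain ⟨m₀, hm₀, huniq⟩ := Pl.unique_line a b hab
  rw [card_eq_one]
  exact ⟨m₀, by ext m; simpa using ⟨huniq m, fun h => h ▸ hm₀⟩⟩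

end ProjPlane

section OrderThree

variable (Pl : ProjPlane 3)

theorem pmEntry_mul_pmEntry (a b : Pl.P) (m : Finset Pl.P) :
    pmEntry Pl a m * pmEntry Pl b m =
      1 - 2 * (if a ∈ m then 1 else 0) - 2 * (if b ∈ m then 1 else 0)
        + 4 * (if a ∈ m ∧ b ∈ m then 1 else 0) := by
  unfold pmEntry; split_ifs <;> simp_all

theorem pmEntry_mul_pmEntry_mul_pmEntry (a b c : Pl.P) (m : Finset Pl.P) :
    pmEntry Pl a m * pmEntry Pl b m * pmEntry Pl c m =
      1 - 2 * ((if a ∈ m then 1 else 0) + (if b ∈ m then 1 else 0) + (if c ∈ m then 1 else 0))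
        + 4 * ((if a ∈ m ∧ b ∈ m then 1 else 0) + (if a ∈ m ∧ c ∈ m then 1 else 0)
          + (if b ∈ m ∧ c ∈ m then 1 else 0))
        - 8 * (if a ∈ m ∧ b ∈ m ∧ c ∈ m then 1 else 0) := by
  unfold pmEntry; split_ifs <;> simp_all

theorem sum_pmEntry_mul_pmEntry {a b : Pl.P} (hab : a ≠ b) :
    ∑ m ∈ Pl.L, pmEntry Pl a m * pmEntry Pl b m = 1 := by
  simp only [pmEntry_mul_pmEntry, sum_add_distrib, sum_sub_distrib, ← mul_sum, sum_boole,
    sum_const, Pl.cardL, Pl.point_lines, Pl.card_filter_mem_and_mem hab]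
  norm_num

theorem sum_pmEntry_mul_pmEntry_mul_pmEntry {a b c : Pl.P} (hab : a ≠ b) (hac : a ≠ c)
    (hbc : b ≠ c) (hcol : ∀ m ∈ Pl.L, a ∈ m → b ∈ m → c ∉ m) :
    ∑ m ∈ Pl.L, pmEntry Pl a m * pmEntry Pl b m * pmEntry Pl c m = 1 := by
  have hempty : {m ∈ Pl.L | a ∈ m ∧ b ∈ m ∧ c ∈ m} = ∅ :=
    filter_eq_empty_iff.2 fun m hm ⟨ha, hb, hc⟩ => hcol m hm ha hb hc
  simp only [pmEntry_mul_pmEntry_mul_pmEntry, sum_add_distrib, sum_sub_distrib, ← mul_sum,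
    sum_boole, sum_const, Pl.cardL, Pl.point_lines, Pl.card_filter_mem_and_mem hab,
    Pl.card_filter_mem_and_mem hac, Pl.card_filter_mem_and_mem hbc, hempty]
  norm_num

theorem hadEntry_mul_hadEntry (p : Pl.P) (ℓ : Finset Pl.P) (a b : Pl.P) (m : Finset Pl.P) :
    hadEntry Pl p ℓ a m * hadEntry Pl p ℓ b m =
      if (a ∈ ℓ ↔ b ∈ ℓ) then pmEntry Pl a m * pmEntry Pl b m
      else pmEntry Pl p m * pmEntry Pl a m * pmEntry Pl b m := by
  unfold hadEntry pmEntry; split_ifs <;> simp_all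

variable {Pl}

theorem sum_erase_pmEntry_mul_pmEntry {ℓ : Finset Pl.P} (hℓ : ℓ ∈ Pl.L) {a b : Pl.P}
    (hab : a ≠ b) (h : a ∈ ℓ ↔ b ∈ ℓ) :
    ∑ m ∈ Pl.L.erase ℓ, pmEntry Pl a m * pmEntry Pl b m = 0 := by
  rw [sum_erase_eq_sub hℓ, sum_pmEntry_mul_pmEntry Pl hab]
  unfold pmEntry; split_ifs <;> simp_all

theorem sum_erase_pmEntry_mul_pmEntry_mul_pmEntry {ℓ : Finset Pl.P} (hℓ : ℓ ∈ Pl.L)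
    {p a b : Pl.P} (hp : p ∈ ℓ) (hpa : p ≠ a) (hpb : p ≠ b) (hab : a ≠ b)
    (h : ¬(a ∈ ℓ ↔ b ∈ ℓ)) :
    ∑ m ∈ Pl.L.erase ℓ, pmEntry Pl p m * pmEntry Pl a m * pmEntry Pl b m = 0 := by
  -- A line through `p` and whichever of `a, b` lies on `ℓ` is `ℓ` itself.
  have hcol : ∀ m ∈ Pl.L, p ∈ m → a ∈ m → b ∉ m := by
    intro m hm hpm ham hbm
    by_cases ha : a ∈ ℓ
    · exact h ⟨fun _ => Pl.eq_of_mem_of_mem hℓ hm hpa hp ha hpm ham ▸ hbm, fun _ => ha⟩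
    · have hb : b ∈ ℓ := by tauto
      exact ha (Pl.eq_of_mem_of_mem hℓ hm hpb hp hb hpm hbm ▸ ham)
  rw [sum_erase_eq_sub hℓ, sum_pmEntry_mul_pmEntry_mul_pmEntry Pl hpa hpb hab hcol]
  unfold pmEntry; split_ifs <;> simp_all

end OrderThree

/-- For an incident point-line pair `(p,ℓ)`, the matrix `H_{p,ℓ}` (rows
indexed by points `≠ p`, columns by lines `≠ ℓ`) is a Hadamard matrix: any
two distinct rows are orthogonal. -/
theorem stmt15 (Pl : ProjPlane 3) (p : Pl.P) (ℓ : Finset Pl.P)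
    (hℓ : ℓ ∈ Pl.L) (hp : p ∈ ℓ)
    (r s : {x : Pl.P // x ≠ p}) (hrs : r ≠ s) :
    ∑ j : {m : Finset Pl.P // m ∈ Pl.L ∧ m ≠ ℓ},
      hadEntry Pl p ℓ r.val j.val * hadEntry Pl p ℓ s.val j.val = 0 := by
  have hrs' : r.val ≠ s.val := Subtype.coe_ne_coe.2 hrs
  rw [← sum_subtype (Pl.L.erase ℓ) (fun m => by rw [mem_erase, and_comm])
    (fun m => hadEntry Pl p ℓ r.val m * hadEntry Pl p ℓ s.val m)]
  simp only [hadEntry_mul_hadEntry]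
  by_cases h : r.val ∈ ℓ ↔ s.val ∈ ℓ
  · simp only [if_pos h]
    exact sum_erase_pmEntry_mul_pmEntry hℓ hrs' h
  · simp only [if_neg h]
    exact sum_erase_pmEntry_mul_pmEntry_mul_pmEntry hℓ hp r.2.symm s.2.symm hrs' h
end

section
/- In a projective plane of order 3, if a set S of 6 points meets every line but contains no line, then there exist three points of S lying on a common line, and S contains an oval (4 points, no three collinear). -/
/-- Double counting point-line incidences. -/
lemma swap_count {P : Type} [DecidableEq P] (A : Finset P) (Ls : Finset (Finset P)) :
    ∑ ℓ ∈ Ls, (A ∩ ℓ).card = ∑ p ∈ A, (Ls.filter (fun ℓ => p ∈ ℓ)).card := by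
  simp only [← Finset.filter_mem_eq_inter, Finset.card_filter]
  exact Finset.sum_comm

/-- Double counting (ordered pair of points)-line incidences. -/
lemma swap_pairs {P : Type} [DecidableEq P] (A : Finset P) (Ls : Finset (Finset P)) :
    ∑ ℓ ∈ Ls, ((A ∩ ℓ).offDiag).card
      = ∑ pq ∈ A.offDiag, (Ls.filter (fun ℓ => pq.1 ∈ ℓ ∧ pq.2 ∈ ℓ)).card := by
  have h : ∀ ℓ : Finset P, (A ∩ ℓ).offDiag
      = A.offDiag.filter (fun pq => pq.1 ∈ ℓ ∧ pq.2 ∈ ℓ) := by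
    intro ℓ
    ext pq
    simp only [Finset.mem_offDiag, Finset.mem_inter, Finset.mem_filter]
    tauto
  simp only [h, Finset.card_filter]
  exact Finset.sum_comm

/-- In a projective plane of order 3, a 6-point set meeting every line but
containing no line has three collinear points, and contains an oval. -/
theorem stmt19 (Pl : ProjPlane 3) (S : Finset Pl.P) (hcard : S.card = 6)
    (hmeets : ∀ ℓ ∈ Pl.L, (S ∩ ℓ).Nonempty)
    (hnoline : ∀ ℓ ∈ Pl.L, ¬ ℓ ⊆ S) :
    (∃ ℓ ∈ Pl.L, 3 ≤ (S ∩ ℓ).card) ∧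
    (∃ O ⊆ S, O.card = 4 ∧ ∀ ℓ ∈ Pl.L, (O ∩ ℓ).card ≤ 2) := by
  classical
  -- basic bounds on intersection sizes
  have hfub : ∀ ℓ ∈ Pl.L, (S ∩ ℓ).card ≤ 3 := by
    intro ℓ hℓ
    by_contra h
    push_neg at h
    have hc4 : ℓ.card = 4 := by have := Pl.line_card ℓ hℓ; omega
    have hsub : S ∩ ℓ ⊆ ℓ := Finset.inter_subset_right
    have hle : (S ∩ ℓ).card ≤ 4 := hc4 ▸ Finset.card_le_card hsub
    have heq : S ∩ ℓ = ℓ := Finset.eq_of_subset_of_card_le hsub (by omega)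
    exact hnoline ℓ hℓ (by rw [← heq]; exact Finset.inter_subset_left)
  have hfl : ∀ ℓ ∈ Pl.L, 1 ≤ (S ∩ ℓ).card := fun ℓ h => Finset.card_pos.mpr (hmeets ℓ h)
  have hL13 : Pl.L.card = 13 := by have := Pl.cardL; norm_num at this; exact this
  -- incidence sum
  have hsum1 : ∑ ℓ ∈ Pl.L, (S ∩ ℓ).card = 24 := by
    rw [swap_count]
    rw [Finset.sum_congr rfl (fun p _ => Pl.point_lines p)]
    simp [hcard]
  -- ordered-pair sum
  have hsum2 : ∑ ℓ ∈ Pl.L, ((S ∩ ℓ).card * (S ∩ ℓ).card - (S ∩ ℓ).card) = 30 := by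
    have hsp := swap_pairs S Pl.L
    simp only [Finset.offDiag_card] at hsp
    rw [hsp]
    have h1 : ∀ pq ∈ S.offDiag,
        (Pl.L.filter (fun ℓ => pq.1 ∈ ℓ ∧ pq.2 ∈ ℓ)).card = 1 := by
      intro pq hpq
      rw [Finset.mem_offDiag] at hpq
      obtain ⟨ℓ0, hℓ0, huniq⟩ := Pl.unique_line pq.1 pq.2 hpq.2.2
      rw [Finset.card_eq_one]
      refine ⟨ℓ0, ?_⟩
      ext m
      simp only [Finset.mem_filter, Finset.mem_singleton]
      constructor
      · rintro ⟨hm, hm1, hm2⟩; exact huniq m ⟨hm, hm1, hm2⟩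
      · rintro rfl; exact ⟨hℓ0.1, hℓ0.2⟩
    rw [Finset.sum_congr rfl h1]
    simp [Finset.offDiag_card, hcard]
  -- counts of lines by intersection size
  set a1 := (Pl.L.filter (fun ℓ => (S ∩ ℓ).card = 1)).card with ha1def
  set a2 := (Pl.L.filter (fun ℓ => (S ∩ ℓ).card = 2)).card with ha2def
  set a3 := (Pl.L.filter (fun ℓ => (S ∩ ℓ).card = 3)).card with ha3def
  have ha1 : a1 = ∑ ℓ ∈ Pl.L, if (S ∩ ℓ).card = 1 then 1 else 0 := Finset.card_filter _ _
  have ha2 : a2 = ∑ ℓ ∈ Pl.L, if (S ∩ ℓ).card = 2 then 1 else 0 := Finset.card_filter _ _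
  have ha3 : a3 = ∑ ℓ ∈ Pl.L, if (S ∩ ℓ).card = 3 then 1 else 0 := Finset.card_filter _ _
  have E0 : a1 + a2 + a3 = 13 := by
    rw [ha1, ha2, ha3, ← Finset.sum_add_distrib, ← Finset.sum_add_distrib, ← hL13]
    rw [Finset.card_eq_sum_ones]
    apply Finset.sum_congr rfl
    intro ℓ hℓ
    have h1 := hfl ℓ hℓ
    have h3 := hfub ℓ hℓ
    set n := (S ∩ ℓ).card with hn
    interval_cases n <;> norm_num
  have E1 : a1 + 2 * a2 + 3 * a3 = 24 := by
    rw [ha1, ha2, ha3, Finset.mul_sum, Finset.mul_sum, ← Finset.sum_add_distrib,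
      ← Finset.sum_add_distrib, ← hsum1]
    apply Finset.sum_congr rfl
    intro ℓ hℓ
    have h1 := hfl ℓ hℓ
    have h3 := hfub ℓ hℓ
    set n := (S ∩ ℓ).card with hn
    interval_cases n <;> norm_num
  have E2 : 2 * a2 + 6 * a3 = 30 := by
    rw [ha2, ha3, Finset.mul_sum, Finset.mul_sum, ← Finset.sum_add_distrib, ← hsum2]
    apply Finset.sum_congr rfl
    intro ℓ hℓ
    have h1 := hfl ℓ hℓ
    have h3 := hfub ℓ hℓ
    set n := (S ∩ ℓ).card with hn
    interval_cases n <;> norm_num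
  have hT4 : a3 = 4 := by omega
  have hB3 : a2 = 3 := by omega
  -- the set of trisecants
  set T := Pl.L.filter (fun ℓ => (S ∩ ℓ).card = 3) with hTdef
  have hTmem : ∀ ℓ ∈ T, ℓ ∈ Pl.L ∧ (S ∩ ℓ).card = 3 := by
    intro ℓ hℓ; exact Finset.mem_filter.mp hℓ
  have hTcard : T.card = 4 := hT4
  -- part 1
  have hTne : T.Nonempty := Finset.card_pos.mp (by omega)
  obtain ⟨ℓ3, hℓ3⟩ := hTne
  have hℓ3' := hTmem ℓ3 hℓ3
  -- each point of S lies on at most 2 trisecants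
  have htle : ∀ p ∈ S, (T.filter (fun ℓ => p ∈ ℓ)).card ≤ 2 := by
    intro p hp
    have h5 : ∑ ℓ ∈ Pl.L.filter (fun ℓ => p ∈ ℓ), ((S.erase p) ∩ ℓ).card = 5 := by
      rw [swap_count]
      have hone : ∀ q ∈ S.erase p,
          ((Pl.L.filter (fun ℓ => p ∈ ℓ)).filter (fun ℓ => q ∈ ℓ)).card = 1 := by
        intro q hq
        have hne : q ≠ p := (Finset.mem_erase.mp hq).1
        obtain ⟨ℓ0, ⟨hℓ0L, hpℓ0, hqℓ0⟩, huniq⟩ := Pl.unique_line p q hne.symm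
        rw [Finset.card_eq_one]
        refine ⟨ℓ0, ?_⟩
        ext m
        simp only [Finset.mem_filter, Finset.mem_singleton]
        constructor
        · rintro ⟨⟨hmL, hpm⟩, hqm⟩; exact huniq m ⟨hmL, hpm, hqm⟩
        · rintro rfl; exact ⟨⟨hℓ0L, hpℓ0⟩, hqℓ0⟩
      rw [Finset.sum_congr rfl hone]
      simp [Finset.card_erase_of_mem hp, hcard]
    have hsub : T.filter (fun ℓ => p ∈ ℓ) ⊆ Pl.L.filter (fun ℓ => p ∈ ℓ) :=
      Finset.filter_subset_filter _ (Finset.filter_subset _ _)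
    have h2each : ∀ ℓ ∈ T.filter (fun ℓ => p ∈ ℓ), ((S.erase p) ∩ ℓ).card = 2 := by
      intro ℓ hℓ
      rw [Finset.mem_filter] at hℓ
      obtain ⟨hℓT, hpℓ⟩ := hℓ
      obtain ⟨hℓL, h3⟩ := hTmem ℓ hℓT
      have heq : (S.erase p) ∩ ℓ = (S ∩ ℓ).erase p := by
        ext z
        simp only [Finset.mem_erase, Finset.mem_inter]
        tauto
      rw [heq, Finset.card_erase_of_mem (Finset.mem_inter.mpr ⟨hp, hpℓ⟩), h3]
    have hkey : 2 * (T.filter (fun ℓ => p ∈ ℓ)).card ≤ 5 := by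
      calc 2 * (T.filter (fun ℓ => p ∈ ℓ)).card
          = ∑ _ℓ ∈ T.filter (fun ℓ => p ∈ ℓ), 2 := by
            rw [Finset.sum_const, smul_eq_mul, mul_comm]
        _ = ∑ ℓ ∈ T.filter (fun ℓ => p ∈ ℓ), ((S.erase p) ∩ ℓ).card :=
            Finset.sum_congr rfl (fun ℓ h => (h2each ℓ h).symm)
        _ ≤ ∑ ℓ ∈ Pl.L.filter (fun ℓ => p ∈ ℓ), ((S.erase p) ∩ ℓ).card :=
            Finset.sum_le_sum_of_subset hsub
        _ = 5 := h5
    omega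
  -- total trisecant incidences = 12
  have hswapT : ∑ p ∈ S, (T.filter (fun ℓ => p ∈ ℓ)).card = 12 := by
    rw [← swap_count]
    rw [Finset.sum_congr rfl (fun ℓ hℓ => (hTmem ℓ hℓ).2)]
    rw [Finset.sum_const, hTcard]
    norm_num
  -- hence each point of S lies on exactly 2 trisecants
  have hteq : ∀ p ∈ S, (T.filter (fun ℓ => p ∈ ℓ)).card = 2 := by
    intro p hp
    by_contra h
    have h1 : (T.filter (fun ℓ => p ∈ ℓ)).card ≤ 1 := by
      have := htle p hp; omega
    have hrest : ∑ q ∈ S.erase p, (T.filter (fun ℓ => q ∈ ℓ)).card ≤ 10 := by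
      have := Finset.sum_le_card_nsmul (S.erase p)
        (fun q => (T.filter (fun ℓ => q ∈ ℓ)).card) 2
        (fun q hq => htle q (Finset.mem_of_mem_erase hq))
      rw [Finset.card_erase_of_mem hp, hcard] at this
      simpa using this
    have htot : (T.filter (fun ℓ => p ∈ ℓ)).card
        + ∑ q ∈ S.erase p, (T.filter (fun ℓ => q ∈ ℓ)).card = 12 := by
      have h' := Finset.add_sum_erase S (fun q => (T.filter (fun ℓ => q ∈ ℓ)).card) hp
      rw [hswapT] at h'
      exact h'
    omega
  -- a bisecant exists
  have hBne : (Pl.L.filter (fun ℓ => (S ∩ ℓ).card = 2)).Nonempty :=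
    Finset.card_pos.mp (by omega)
  obtain ⟨m, hm⟩ := hBne
  rw [Finset.mem_filter] at hm
  obtain ⟨hmL, hm2⟩ := hm
  obtain ⟨x, y, hxy, hset⟩ := Finset.card_eq_two.mp hm2
  have hxS : x ∈ S := (Finset.mem_inter.mp (hset ▸ (by simp : x ∈ ({x, y} : Finset Pl.P)))).1
  have hyS : y ∈ S := (Finset.mem_inter.mp (hset ▸ (by simp : y ∈ ({x, y} : Finset Pl.P)))).1
  have hxm : x ∈ m := (Finset.mem_inter.mp (hset ▸ (by simp : x ∈ ({x, y} : Finset Pl.P)))).2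
  have hym : y ∈ m := (Finset.mem_inter.mp (hset ▸ (by simp : y ∈ ({x, y} : Finset Pl.P)))).2
  have hxyS : ({x, y} : Finset Pl.P) ⊆ S := by
    intro z hz
    simp only [Finset.mem_insert, Finset.mem_singleton] at hz
    rcases hz with rfl | rfl
    · exact hxS
    · exact hyS
  refine ⟨⟨ℓ3, hℓ3'.1, le_of_eq hℓ3'.2.symm⟩, S \ {x, y}, Finset.sdiff_subset, ?_, ?_⟩
  · rw [Finset.card_sdiff_of_subset hxyS, hcard, Finset.card_pair hxy]
  · intro ℓ hℓ
    by_contra h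
    push_neg at h
    have hsub2 : (S \ {x, y}) ∩ ℓ ⊆ S ∩ ℓ :=
      Finset.inter_subset_inter Finset.sdiff_subset (le_refl _)
    have h3 : (S ∩ ℓ).card = 3 :=
      le_antisymm (hfub ℓ hℓ) (le_trans h (Finset.card_le_card hsub2))
    have heq : (S \ {x, y}) ∩ ℓ = S ∩ ℓ :=
      Finset.eq_of_subset_of_card_le hsub2 (by omega)
    have hxℓ : x ∉ ℓ := by
      intro hx
      have : x ∈ (S \ {x, y}) ∩ ℓ := heq ▸ Finset.mem_inter.mpr ⟨hxS, hx⟩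
      simp at this
    have hyℓ : y ∉ ℓ := by
      intro hy
      have : y ∈ (S \ {x, y}) ∩ ℓ := heq ▸ Finset.mem_inter.mpr ⟨hyS, hy⟩
      simp at this
    have hℓT : ℓ ∈ T := Finset.mem_filter.mpr ⟨hℓ, h3⟩
    have hTx : (T.filter (fun ℓ' => x ∈ ℓ')).card = 2 := hteq x hxS
    have hTy : (T.filter (fun ℓ' => y ∈ ℓ')).card = 2 := hteq y hyS
    have hTx_sub : T.filter (fun ℓ' => x ∈ ℓ') ⊆ T.erase ℓ := by
      intro n hn
      rw [Finset.mem_filter] at hn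
      rw [Finset.mem_erase]
      exact ⟨fun he => hxℓ (he ▸ hn.2), hn.1⟩
    have hTy_sub : T.filter (fun ℓ' => y ∈ ℓ') ⊆ T.erase ℓ := by
      intro n hn
      rw [Finset.mem_filter] at hn
      rw [Finset.mem_erase]
      exact ⟨fun he => hyℓ (he ▸ hn.2), hn.1⟩
    have herase : (T.erase ℓ).card = 3 := by
      rw [Finset.card_erase_of_mem hℓT, hTcard]
    have hun : (T.filter (fun ℓ' => x ∈ ℓ') ∪ T.filter (fun ℓ' => y ∈ ℓ')).card ≤ 3 :=
      le_trans (Finset.card_le_card (Finset.union_subset hTx_sub hTy_sub)) (le_of_eq herase)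
    have hci := Finset.card_union_add_card_inter
      (T.filter (fun ℓ' => x ∈ ℓ')) (T.filter (fun ℓ' => y ∈ ℓ'))
    rw [hTx, hTy] at hci
    have hine : (T.filter (fun ℓ' => x ∈ ℓ') ∩ T.filter (fun ℓ' => y ∈ ℓ')).Nonempty :=
      Finset.card_pos.mp (by omega)
    obtain ⟨ℓ', hℓ'⟩ := hine
    simp only [Finset.mem_inter, Finset.mem_filter] at hℓ'
    obtain ⟨⟨hℓ'T, hxℓ'⟩, _, hyℓ'⟩ := hℓ'
    obtain ⟨hℓ'L, hℓ'3⟩ := hTmem ℓ' hℓ'T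
    have hmne : m ≠ ℓ' := by
      intro he
      rw [he, hℓ'3] at hm2
      omega
    have hmeet := Pl.lines_meet m hmL ℓ' hℓ'L hmne
    have hpair : ({x, y} : Finset Pl.P) ⊆ m ∩ ℓ' := by
      intro z hz
      simp only [Finset.mem_insert, Finset.mem_singleton] at hz
      rcases hz with rfl | rfl
      · exact Finset.mem_inter.mpr ⟨hxm, hxℓ'⟩
      · exact Finset.mem_inter.mpr ⟨hym, hyℓ'⟩
    have := Finset.card_le_card hpair
    rw [hmeet, Finset.card_pair hxy] at this
    omega
end
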